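/- arXiv:2407.07039 — 11 statements merged into one kernel-verified Lean document; each statement's English description precedes it below -/
import Mathlib

section
/- Let a₁ < a₂ < … < a_d be real numbers, n ∈ ℕ, ε ∈ {0,1}^d, and let ξ₁, …, ξₙ be pairwise distinct real numbers, all distinct from every aⱼ. Define Q(x) = x₁^{ε₁}⋯x_d^{ε_d} · ∏_{k=1}^n (x₁²/(ξ_k − a₁) + … + x_d²/(ξ_k − a_d)). Then Q is harmonic if and only if for every k ∈ {1,…,n}, Σ_{j=1}^d (1+2εⱼ)/(ξ_k − aⱼ) + Σ_{ℓ≠k} 4/(ξ_k − ξ_ℓ) = 0. -/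
open MvPolynomial Finset

/-- The Laplacian of a multivariate polynomial. -/
noncomputable def mvLap {d : ℕ} (p : MvPolynomial (Fin d) ℝ) : MvPolynomial (Fin d) ℝ :=
  ∑ j : Fin d, pderiv j (pderiv j p)

private lemma pderiv_finset_prod {σ ι : Type*} [DecidableEq ι] (i : σ)
    (s : Finset ι) (f : ι → MvPolynomial σ ℝ) :
    pderiv i (∏ k ∈ s, f k) = ∑ k ∈ s, pderiv i (f k) * ∏ l ∈ s.erase k, f l := by
  classical
  induction s using Finset.induction_on with
  | empty => simp
  | @insert a s ha ih =>
    rw [Finset.prod_insert ha, pderiv_mul, ih, Finset.sum_insert ha, Finset.erase_insert ha,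
      Finset.mul_sum]
    congr 1
    refine Finset.sum_congr rfl fun k hk => ?_
    rw [Finset.erase_insert_of_ne (by rintro rfl; exact ha hk),
      Finset.prod_insert (fun h => ha (Finset.mem_of_mem_erase h))]
    ring

private lemma mvLap_mul {d : ℕ} (p q : MvPolynomial (Fin d) ℝ) :
    mvLap (p * q) = mvLap p * q + p * mvLap q + 2 * ∑ j, pderiv j p * pderiv j q := by
  unfold mvLap
  simp only [pderiv_mul, map_add]
  rw [Finset.sum_mul, Finset.mul_sum, Finset.mul_sum, ← Finset.sum_add_distrib,
    ← Finset.sum_add_distrib]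
  refine Finset.sum_congr rfl fun j _ => ?_
  ring

private lemma sum_erase_comm {n : ℕ} {M : Type*} [AddCommMonoid M] (f : Fin n → Fin n → M) :
    ∑ k, ∑ m ∈ univ.erase k, f k m = ∑ k, ∑ m ∈ univ.erase k, f m k := by
  simp only [← Finset.filter_ne', Finset.sum_filter]
  rw [Finset.sum_comm]
  refine Finset.sum_congr rfl fun k _ => Finset.sum_congr rfl fun m _ => ?_
  simp [ne_comm]

private lemma lap_prod {d n : ℕ} (E : MvPolynomial (Fin d) ℝ) (F : Fin n → MvPolynomial (Fin d) ℝ)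
    (c : Fin n → Fin d → ℝ) (e : Fin d → ℝ) (w : Fin n → Fin n → ℝ)
    (hE2 : ∀ j, pderiv j (pderiv j E) = 0)
    (hXE : ∀ j, X j * pderiv j E = C (e j) * E)
    (hdF : ∀ (j : Fin d) k, pderiv j (F k) = C (2 * c k j) * X j)
    (hFF : ∀ k m, k ≠ m →
      (∑ j, (C (2 * c k j) * X j) * (C (2 * c m j) * X j)) = C (w k m) * (F k - F m))
    (hws : ∀ k m, w m k = - w k m) :
    mvLap (E * ∏ k, F k) =
      ∑ k, C ((∑ j, (2 + 4 * e j) * c k j) + ∑ m ∈ univ.erase k, 2 * w m k) *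
        (E * ∏ l ∈ univ.erase k, F l) := by
  classical
  set P : MvPolynomial (Fin d) ℝ := ∏ k, F k with hP
  have hdP : ∀ j, pderiv j P = ∑ k, (C (2 * c k j) * X j) * ∏ l ∈ univ.erase k, F l := by
    intro j
    rw [hP, pderiv_finset_prod]
    exact Finset.sum_congr rfl fun k _ => by rw [hdF]
  have hddP : ∀ j, pderiv j (pderiv j P) =
      (∑ k, C (2 * c k j) * ∏ l ∈ univ.erase k, F l) +
      ∑ k, ∑ m ∈ univ.erase k,
        ((C (2 * c k j) * X j) * (C (2 * c m j) * X j)) * ∏ l ∈ (univ.erase k).erase m, F l := by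
    intro j
    rw [hdP, map_sum, ← Finset.sum_add_distrib]
    refine Finset.sum_congr rfl fun k _ => ?_
    rw [pderiv_mul, pderiv_C_mul, pderiv_X_self, mul_one, pderiv_finset_prod, Finset.mul_sum]
    congr 1
    exact Finset.sum_congr rfl fun m _ => by rw [hdF]; ring
  -- Laplacian of P
  have hLapP : mvLap P =
      (∑ k, C (∑ j, 2 * c k j) * ∏ l ∈ univ.erase k, F l) +
      ∑ k, C (∑ m ∈ univ.erase k, 2 * w m k) * ∏ l ∈ univ.erase k, F l := by
    show (∑ j, pderiv j (pderiv j P)) = _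
    simp only [hddP]
    rw [Finset.sum_add_distrib]
    congr 1
    · rw [Finset.sum_comm]
      refine Finset.sum_congr rfl fun k _ => ?_
      rw [map_sum, Finset.sum_mul]
    · -- double sum manipulation
      rw [Finset.sum_comm]
      have step1 : ∀ k : Fin n, (∑ j, ∑ m ∈ univ.erase k,
          ((C (2 * c k j) * X j) * (C (2 * c m j) * X j)) * ∏ l ∈ (univ.erase k).erase m, F l)
          = ∑ m ∈ univ.erase k, (C (w k m) * (F k - F m)) * ∏ l ∈ (univ.erase k).erase m, F l := by
        intro k
        rw [Finset.sum_comm]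
        refine Finset.sum_congr rfl fun m hm => ?_
        rw [← Finset.sum_mul, hFF k m (Finset.ne_of_mem_erase hm).symm]
      simp only [step1]
      have step2 : ∀ k : Fin n, ∀ m ∈ univ.erase k,
          (C (w k m) * (F k - F m)) * ∏ l ∈ (univ.erase k).erase m, F l
          = C (w k m) * (∏ l ∈ univ.erase m, F l) - C (w k m) * ∏ l ∈ univ.erase k, F l := by
        intro k m hm
        have hmk : m ≠ k := Finset.ne_of_mem_erase hm
        have h1 : F k * ∏ l ∈ (univ.erase k).erase m, F l = ∏ l ∈ univ.erase m, F l := by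
          rw [Finset.erase_right_comm]
          exact Finset.mul_prod_erase _ _ (Finset.mem_erase.mpr ⟨hmk.symm, Finset.mem_univ _⟩)
        have h2 : F m * ∏ l ∈ (univ.erase k).erase m, F l = ∏ l ∈ univ.erase k, F l :=
          Finset.mul_prod_erase _ _ hm
        calc (C (w k m) * (F k - F m)) * ∏ l ∈ (univ.erase k).erase m, F l
            = C (w k m) * (F k * ∏ l ∈ (univ.erase k).erase m, F l)
              - C (w k m) * (F m * ∏ l ∈ (univ.erase k).erase m, F l) := by ring
          _ = _ := by rw [h1, h2]
      rw [Finset.sum_congr rfl fun k _ => Finset.sum_congr rfl (step2 k)]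
      simp only [Finset.sum_sub_distrib]
      rw [sum_erase_comm (fun k m => C (w k m) * (∏ l ∈ univ.erase m, F l))]
      rw [← Finset.sum_sub_distrib]
      refine Finset.sum_congr rfl fun k _ => ?_
      rw [← Finset.sum_sub_distrib, map_sum, Finset.sum_mul]
      refine Finset.sum_congr rfl fun m hm => ?_
      rw [← sub_mul, ← map_sub, show w m k - w k m = 2 * w m k by rw [hws k m]; ring]
  -- cross term
  have hcross : (2 : MvPolynomial (Fin d) ℝ) * ∑ j, pderiv j E * pderiv j P
      = ∑ k, C (∑ j, 4 * e j * c k j) * (E * ∏ l ∈ univ.erase k, F l) := by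
    simp only [hdP, Finset.mul_sum]
    rw [Finset.sum_comm]
    refine Finset.sum_congr rfl fun k _ => ?_
    rw [map_sum C _ univ, Finset.sum_mul]
    refine Finset.sum_congr rfl fun j _ => ?_
    set G : MvPolynomial (Fin d) ℝ := ∏ l ∈ univ.erase k, F l with hGdef
    have hc2 : (C (4 * e j * c k j) : MvPolynomial (Fin d) ℝ) = 2 * C (2 * c k j) * C (e j) := by
      rw [show (4:ℝ) * e j * c k j = 2 * ((2 * c k j) * e j) by ring, map_mul, map_mul,
        map_ofNat]
      ring
    rw [hc2]
    calc 2 * (pderiv j E * (C (2 * c k j) * X j * G))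
        = 2 * C (2 * c k j) * ((X j * pderiv j E) * G) := by ring
      _ = 2 * C (2 * c k j) * ((C (e j) * E) * G) := by rw [hXE]
      _ = 2 * C (2 * c k j) * C (e j) * (E * G) := by ring
  have hLapE : mvLap E = 0 := by
    show (∑ j, pderiv j (pderiv j E)) = 0
    exact Finset.sum_eq_zero fun j _ => hE2 j
  rw [mvLap_mul, hLapE, zero_mul, zero_add, hLapP, hcross, mul_add, Finset.mul_sum,
    Finset.mul_sum, ← Finset.sum_add_distrib, ← Finset.sum_add_distrib]
  refine Finset.sum_congr rfl fun k _ => ?_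
  rw [map_add]
  have hsplit : C ((∑ j, ((2:ℝ) + 4 * e j) * c k j)) =
      (C (∑ j, (2:ℝ) * c k j) + C (∑ j, 4 * e j * c k j) : MvPolynomial (Fin d) ℝ) := by
    rw [← map_add, ← Finset.sum_add_distrib]
    congr 1
    exact Finset.sum_congr rfl fun j _ => by ring
  rw [hsplit]
  ring

private lemma sum_zero_iff {d n : ℕ} (hd : 2 ≤ d) (a : Fin d → ℝ) (ha : StrictMono a)
    (ε : Fin d → ℕ) (ξ : Fin n → ℝ) (hξ : Function.Injective ξ) (hξa : ∀ k j, ξ k ≠ a j)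
    (L : Fin n → ℝ) :
    ((∑ k, C (L k) * ((∏ j, X j ^ ε j) *
        ∏ l ∈ univ.erase k, (∑ j, C ((ξ l - a j)⁻¹) * X j ^ 2)))
      : MvPolynomial (Fin d) ℝ) = 0 ↔ ∀ k, L k = 0 := by
  classical
  have haj : ∀ (k : Fin n) j, ξ k - a j ≠ 0 := fun k j => sub_ne_zero.mpr (hξa k j)
  have hxx : ∀ {k m : Fin n}, k ≠ m → ξ k - ξ m ≠ 0 :=
    fun {k m} h => sub_ne_zero.mpr fun he => h (hξ he)
  constructor
  · intro h0 k
    have hEne : (∏ j, (X j ^ ε j : MvPolynomial (Fin d) ℝ)) ≠ 0 :=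
      Finset.prod_ne_zero_iff.mpr fun j _ => pow_ne_zero _ (X_ne_zero j)
    have hfact : ((∑ k, C (L k) * ((∏ j, X j ^ ε j) *
          ∏ l ∈ univ.erase k, (∑ j, C ((ξ l - a j)⁻¹) * X j ^ 2)))
        : MvPolynomial (Fin d) ℝ) = (∏ j, X j ^ ε j) *
          ∑ k, C (L k) * ∏ l ∈ univ.erase k, (∑ j, C ((ξ l - a j)⁻¹) * X j ^ 2) := by
      rw [Finset.mul_sum]
      exact Finset.sum_congr rfl fun k _ => by ring
    rw [hfact] at h0
    have hS : (∑ k, C (L k) * ∏ l ∈ univ.erase k,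
        ((∑ j, C ((ξ l - a j)⁻¹) * X j ^ 2) : MvPolynomial (Fin d) ℝ)) = 0 :=
      (mul_eq_zero.mp h0).resolve_left hEne
    -- complex evaluation
    have h0d : 0 < d := by omega
    have h1d : 1 < d := by omega
    set j0 : Fin d := ⟨0, h0d⟩ with hj0def
    set j1 : Fin d := ⟨1, h1d⟩ with hj1def
    have hj01 : j0 ≠ j1 := Fin.ne_of_val_ne (by norm_num)
    have ha01 : a j0 ≠ a j1 := fun h => hj01 (ha.injective h)
    obtain ⟨z0, hz0⟩ := IsAlgClosed.exists_pow_nat_eq (k := ℂ)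
      (((-(ξ k - a j1)⁻¹ : ℝ) : ℂ)) (n := 2) (by norm_num)
    obtain ⟨z1, hz1⟩ := IsAlgClosed.exists_pow_nat_eq (k := ℂ)
      ((((ξ k - a j0)⁻¹ : ℝ) : ℂ)) (n := 2) (by norm_num)
    set x : Fin d → ℂ := fun j => if j = j0 then z0 else if j = j1 then z1 else 0 with hxdef
    set v : Fin n → ℝ :=
      fun m => (ξ m - a j0)⁻¹ * (-(ξ k - a j1)⁻¹) + (ξ m - a j1)⁻¹ * (ξ k - a j0)⁻¹ with hvdef
    have hFval : ∀ m : Fin n,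
        aeval x ((∑ j, C ((ξ m - a j)⁻¹) * X j ^ 2) : MvPolynomial (Fin d) ℝ) = ((v m : ℝ) : ℂ) := by
      intro m
      rw [map_sum, ← Finset.add_sum_erase _ _ (mem_univ j0),
        ← Finset.add_sum_erase _ _ (Finset.mem_erase.mpr ⟨hj01.symm, mem_univ j1⟩)]
      have hrest : ∑ j ∈ (univ.erase j0).erase j1,
          aeval x ((C ((ξ m - a j)⁻¹) * X j ^ 2) : MvPolynomial (Fin d) ℝ) = 0 :=
        Finset.sum_eq_zero fun j hj => by
          have h0 : j ≠ j0 := Finset.ne_of_mem_erase (Finset.mem_of_mem_erase hj)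
          have h1 : j ≠ j1 := Finset.ne_of_mem_erase hj
          simp [hxdef, h0, h1]
      rw [hrest, add_zero]
      simp only [map_mul, map_pow, aeval_X, aeval_C]
      have hx0 : x j0 = z0 := by simp [hxdef]
      have hx1 : x j1 = z1 := by simp [hxdef, hj01.symm]
      rw [hx0, hx1, hz0, hz1, hvdef]
      simp only [Complex.coe_algebraMap]
      norm_cast
    have hvk : v k = 0 := by rw [hvdef]; ring
    have hvm : ∀ m : Fin n, m ≠ k → v m ≠ 0 := by
      intro m hm
      have e1 := haj m j0
      have e2 := haj m j1
      have e3 := haj k j0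
      have e4 := haj k j1
      have hveq : v m = ((a j0 - a j1) * (ξ m - ξ k)) /
          ((ξ m - a j0) * (ξ m - a j1) * (ξ k - a j0) * (ξ k - a j1)) := by
        rw [hvdef]
        field_simp
        ring
      rw [hveq]
      exact div_ne_zero (mul_ne_zero (sub_ne_zero.mpr ha01) (hxx hm))
        (mul_ne_zero (mul_ne_zero (mul_ne_zero e1 e2) e3) e4)
    have hev := congrArg (aeval x) hS
    rw [map_sum, map_zero] at hev
    simp only [map_mul, aeval_C, map_prod, hFval] at hev
    rw [Finset.sum_eq_single k] at hev
    · have hprod : (∏ m ∈ univ.erase k, ((v m : ℝ) : ℂ)) ≠ 0 :=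
        Finset.prod_ne_zero_iff.mpr fun m hm => by
          simpa using hvm m (Finset.ne_of_mem_erase hm)
      have hLk : algebraMap ℝ ℂ (L k) = 0 := (mul_eq_zero.mp hev).resolve_right hprod
      simpa [Complex.coe_algebraMap, Complex.ofReal_eq_zero] using hLk
    · intro l _ hl
      apply mul_eq_zero_of_right
      refine Finset.prod_eq_zero (Finset.mem_erase.mpr ⟨fun h => hl h.symm, mem_univ k⟩) ?_
      rw [hvk, Complex.ofReal_zero]
    · intro hk
      exact absurd (mem_univ k) hk
  · intro h
    exact Finset.sum_eq_zero fun k _ => by rw [h k, map_zero, zero_mul]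

/-- Niven's theorem. With `a₁ < … < a_d`, `ε ∈ {0,1}^d` and pairwise distinct
`ξ₁,…,ξₙ` distinct from all `aⱼ`, the polynomial
`Q(x) = x₁^{ε₁}⋯x_d^{ε_d} ∏ₖ (∑ⱼ xⱼ²/(ξₖ − aⱼ))` is harmonic iff Niven's equations hold. -/
theorem stmt2 {d n : ℕ} (hd : 2 ≤ d) (a : Fin d → ℝ) (ha : StrictMono a)
    (ε : Fin d → ℕ) (hε : ∀ j, ε j ≤ 1)
    (ξ : Fin n → ℝ) (hξ : Function.Injective ξ) (hξa : ∀ k j, ξ k ≠ a j) :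
    mvLap ((∏ j, X j ^ ε j) *
        ∏ k, (∑ j, MvPolynomial.C (ξ k - a j)⁻¹ * X j ^ 2)) = 0 ↔
      ∀ k, (∑ j, (1 + 2 * (ε j : ℝ)) / (ξ k - a j)) +
        ∑ ℓ ∈ univ \ {k}, 4 / (ξ k - ξ ℓ) = 0 := by
  classical
  have haj : ∀ (k : Fin n) j, ξ k - a j ≠ 0 := fun k j => sub_ne_zero.mpr (hξa k j)
  have hxx : ∀ {k m : Fin n}, k ≠ m → ξ k - ξ m ≠ 0 :=
    fun {k m} h => sub_ne_zero.mpr fun he => h (hξ he)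
  have hEe : ∀ j : Fin d,
      pderiv j (∏ i ∈ univ.erase j, (X i ^ ε i : MvPolynomial (Fin d) ℝ)) = 0 := by
    intro j
    rw [pderiv_finset_prod]
    refine Finset.sum_eq_zero fun i hi => ?_
    rw [pderiv_pow, pderiv_X_of_ne (Finset.ne_of_mem_erase hi), mul_zero, zero_mul]
  have hEsplit : ∀ j : Fin d, (∏ i, (X i ^ ε i : MvPolynomial (Fin d) ℝ))
      = X j ^ ε j * ∏ i ∈ univ.erase j, X i ^ ε i :=
    fun j => (Finset.mul_prod_erase univ _ (mem_univ j)).symm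
  have hE2 : ∀ j : Fin d,
      pderiv j (pderiv j (∏ i, (X i ^ ε i : MvPolynomial (Fin d) ℝ))) = 0 := by
    intro j
    rcases Nat.le_one_iff_eq_zero_or_eq_one.mp (hε j) with h | h
    · rw [hEsplit j, h, pow_zero, one_mul, hEe, map_zero]
    · rw [hEsplit j, h, pow_one, pderiv_mul, pderiv_X_self, one_mul, hEe, mul_zero, add_zero,
        hEe]
  have hXE : ∀ j : Fin d, X j * pderiv j (∏ i, (X i ^ ε i : MvPolynomial (Fin d) ℝ))
      = C ((ε j : ℝ)) * ∏ i, X i ^ ε i := by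
    intro j
    rcases Nat.le_one_iff_eq_zero_or_eq_one.mp (hε j) with h | h
    · rw [hEsplit j, h]
      simp [hEe j]
    · rw [hEsplit j, h]
      simp [hEe j, pderiv_mul]
  have hdF : ∀ (j : Fin d) (k : Fin n),
      pderiv j ((∑ j', C ((ξ k - a j')⁻¹) * X j' ^ 2) : MvPolynomial (Fin d) ℝ)
        = C (2 * (ξ k - a j)⁻¹) * X j := by
    intro j k
    rw [map_sum, Finset.sum_eq_single j]
    · rw [pderiv_C_mul, pderiv_pow, pderiv_X_self, mul_one, pow_one, map_mul, map_ofNat,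
        Nat.cast_ofNat]
      ring
    · intro b _ hb
      rw [pderiv_C_mul, pderiv_pow, pderiv_X_of_ne hb, mul_zero, mul_zero]
    · intro h
      exact absurd (mem_univ j) h
  have hFF : ∀ k m : Fin n, k ≠ m →
      ((∑ j, (C (2 * (ξ k - a j)⁻¹) * X j) * (C (2 * (ξ m - a j)⁻¹) * X j))
        : MvPolynomial (Fin d) ℝ)
      = C (4 * (ξ m - ξ k)⁻¹) *
        ((∑ j, C ((ξ k - a j)⁻¹) * X j ^ 2) - ∑ j, C ((ξ m - a j)⁻¹) * X j ^ 2) := by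
    intro k m hkm
    rw [← Finset.sum_sub_distrib, Finset.mul_sum]
    refine Finset.sum_congr rfl fun j _ => ?_
    have h3 : ξ m - ξ k ≠ 0 := hxx (Ne.symm hkm)
    have hs : (2 * (ξ k - a j)⁻¹) * (2 * (ξ m - a j)⁻¹)
        = (4 * (ξ m - ξ k)⁻¹) * ((ξ k - a j)⁻¹ - (ξ m - a j)⁻¹) := by
      have h1 := haj k j
      have h2 := haj m j
      field_simp
      ring
    calc (C (2 * (ξ k - a j)⁻¹) * X j) * (C (2 * (ξ m - a j)⁻¹) * X j)
        = C ((2 * (ξ k - a j)⁻¹) * (2 * (ξ m - a j)⁻¹)) * X j ^ 2 := by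
          rw [map_mul C (2 * (ξ k - a j)⁻¹) (2 * (ξ m - a j)⁻¹)]; ring
      _ = C ((4 * (ξ m - ξ k)⁻¹) * ((ξ k - a j)⁻¹ - (ξ m - a j)⁻¹)) * X j ^ 2 := by rw [hs]
      _ = C (4 * (ξ m - ξ k)⁻¹) * (C ((ξ k - a j)⁻¹) * X j ^ 2 - C ((ξ m - a j)⁻¹) * X j ^ 2)
          := by
            rw [map_mul C (4 * (ξ m - ξ k)⁻¹) ((ξ k - a j)⁻¹ - (ξ m - a j)⁻¹), map_sub]; ring
  have hws : ∀ k m : Fin n, (4 * (ξ k - ξ m)⁻¹) = -(4 * (ξ m - ξ k)⁻¹) := by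
    intro k m
    rw [show ξ m - ξ k = -(ξ k - ξ m) by ring, inv_neg]
    ring
  have key := lap_prod (∏ j, X j ^ ε j) (fun k => ∑ j, C ((ξ k - a j)⁻¹) * X j ^ 2)
      (fun k j => (ξ k - a j)⁻¹) (fun j => (ε j : ℝ)) (fun k m => 4 * (ξ m - ξ k)⁻¹)
      hE2 hXE hdF hFF hws
  rw [key]
  have hcoef : ∀ k : Fin n,
      ((∑ j, (2 + 4 * (ε j : ℝ)) * (ξ k - a j)⁻¹)
        + ∑ m ∈ univ.erase k, 2 * (4 * (ξ k - ξ m)⁻¹))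
      = 2 * ((∑ j, (1 + 2 * (ε j : ℝ)) / (ξ k - a j)) + ∑ ℓ ∈ univ \ {k}, 4 / (ξ k - ξ ℓ)) := by
    intro k
    rw [Finset.sdiff_singleton_eq_erase, mul_add]
    have h1 : (∑ j, (2 + 4 * (ε j : ℝ)) * (ξ k - a j)⁻¹)
        = 2 * ∑ j, (1 + 2 * (ε j : ℝ)) / (ξ k - a j) := by
      rw [Finset.mul_sum]
      exact Finset.sum_congr rfl fun j _ => by rw [div_eq_mul_inv]; ring
    have h2 : (∑ m ∈ univ.erase k, 2 * (4 * (ξ k - ξ m)⁻¹))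
        = 2 * ∑ ℓ ∈ univ.erase k, 4 / (ξ k - ξ ℓ) := by
      rw [Finset.mul_sum]
      exact Finset.sum_congr rfl fun m _ => by rw [div_eq_mul_inv]
    rw [h1, h2]
  have hrw : (∑ k, C ((∑ j, (2 + 4 * (ε j : ℝ)) * (ξ k - a j)⁻¹)
        + ∑ m ∈ univ.erase k, 2 * (4 * (ξ k - ξ m)⁻¹)) *
      ((∏ j, X j ^ ε j) * ∏ l ∈ univ.erase k, (∑ j, C ((ξ l - a j)⁻¹) * X j ^ 2))
        : MvPolynomial (Fin d) ℝ)
      = ∑ k, C (2 * ((∑ j, (1 + 2 * (ε j : ℝ)) / (ξ k - a j))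
            + ∑ ℓ ∈ univ \ {k}, 4 / (ξ k - ξ ℓ))) *
      ((∏ j, X j ^ ε j) * ∏ l ∈ univ.erase k, (∑ j, C ((ξ l - a j)⁻¹) * X j ^ 2)) :=
    Finset.sum_congr rfl fun k _ => by rw [hcoef k]
  rw [hrw, sum_zero_iff hd a ha ε ξ hξ hξa]
  constructor
  · intro h k
    have := h k
    linarith
  · intro h k
    rw [h k, mul_zero]
end

section
/- The rational functions x ↦ 1/K_{ξ₁}(x), …, x ↦ 1/K_{ξₙ}(x), where K_ξ(x) = Σ_{j=1}^d xⱼ²/(ξ − aⱼ) and ξ₁, …, ξₙ are pairwise distinct real numbers distinct from a₁, …, a_d, are linearly independent over ℝ. -/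
/-!
Along the curve `x(u) = √(u - a₁) e₁ + √(a₂ - u) e₂`, `u ∈ [a₁, a₂]`, one has
`K_ξ(x(u)) = (a₁ - a₂)(u - ξ) / ((ξ - a₁)(ξ - a₂))`, so the functions `1/K_{ξₖ}` restrict to
nonzero multiples of `u ↦ 1/(u - ξₖ)`. Functions with simple poles at distinct points are
linearly independent on any infinite set: clearing denominators in a vanishing combination gives
a polynomial with infinitely many roots, and evaluating it at `ξₖ` isolates the `k`-th coefficient.
-/

open Finset Polynomial Lagrange

theorem linearIndependent_inv_sub {K ι : Type*} [Field K] [Fintype ι] {p : ι → K}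
    (hp : Function.Injective p) {T : Set K} (hT : T.Infinite) :
    LinearIndependent K (fun k (u : T) => ((u : K) - p k)⁻¹) := by
  classical
  rw [Fintype.linearIndependent_iff]
  intro c hc k
  set P : K[X] := ∑ i, C (c i) * nodal (univ.erase i) p
  have hP : P = 0 := by
    refine eq_zero_of_infinite_isRoot P ((hT.sdiff (Set.finite_range p)).mono ?_)
    rintro u ⟨huT, hup⟩
    have hne : ∀ i, u - p i ≠ 0 := fun i => sub_ne_zero.2 fun h => hup ⟨i, h.symm⟩
    have hsum : ∑ i, c i * (u - p i)⁻¹ = 0 := by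
      simpa using congrFun hc ⟨u, huT⟩
    have heval : ∀ i, (nodal (univ.erase i) p).eval u = (u - p i)⁻¹ * (nodal univ p).eval u := by
      intro i
      rw [nodal_eq_mul_nodal_erase (mem_univ i), eval_mul, eval_sub, eval_X, eval_C,
        inv_mul_cancel_left₀ (hne i)]
    show P.eval u = 0
    simp only [P, eval_finsetSum, eval_mul, eval_C, heval, ← mul_assoc, ← sum_mul, hsum, zero_mul]
  have hk : c k * (nodal (univ.erase k) p).eval (p k) = 0 := by
    have := congrArg (eval (p k)) hP
    rwa [eval_zero, eval_finsetSum, sum_eq_single k, eval_mul, eval_C] at this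
    · intro i _ hik
      rw [eval_mul, eval_nodal_at_node (mem_erase.2 ⟨Ne.symm hik, mem_univ k⟩), mul_zero]
    · simp
  refine (mul_eq_zero.1 hk).resolve_right (eval_nodal_not_at_node fun i hi => ?_)
  exact fun h => (mem_erase.1 hi).1 (hp h).symm

noncomputable def twoCoordinatePoint {ι : Type*} [DecidableEq ι] (a : ι → ℝ) (i j : ι) (u : ℝ) :
    ι → ℝ :=
  Pi.single i √(u - a i) + Pi.single j √(a j - u)

theorem sum_sq_twoCoordinatePoint_div {ι : Type*} [Fintype ι] [DecidableEq ι] {a : ι → ℝ}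
    {i j : ι} (hij : i ≠ j) {u t : ℝ} (hu : u ∈ Set.Icc (a i) (a j)) (hti : t ≠ a i)
    (htj : t ≠ a j) :
    ∑ l, twoCoordinatePoint a i j u l ^ 2 / (t - a l) =
      (a i - a j) * (u - t) / ((t - a i) * (t - a j)) := by
  rw [Fintype.sum_eq_add i j hij fun l ⟨hli, hlj⟩ => by simp [twoCoordinatePoint, hli, hlj]]
  simp only [twoCoordinatePoint, Pi.add_apply, Pi.single_eq_same, Pi.single_eq_of_ne hij,
    Pi.single_eq_of_ne hij.symm, add_zero, zero_add, Real.sq_sqrt (sub_nonneg.2 hu.1),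
    Real.sq_sqrt (sub_nonneg.2 hu.2)]
  field_simp [sub_ne_zero.2 hti, sub_ne_zero.2 htj]
  ring

/-- The functions `x ↦ 1/K_{ξₖ}(x)`, for pairwise distinct `ξₖ` distinct from
the `aⱼ`, are linearly independent over `ℝ` as functions on the set where all `K_{ξₖ} ≠ 0`. -/
theorem stmt4 {d n : ℕ} (hd : 2 ≤ d) (a : Fin d → ℝ) (ha : StrictMono a)
    (ξ : Fin n → ℝ) (hξ : Function.Injective ξ) (hξa : ∀ k j, ξ k ≠ a j)
    (K : ℝ → (Fin d → ℝ) → ℝ) (hK : ∀ t x, K t x = ∑ j, x j ^ 2 / (t - a j)) :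
    LinearIndependent ℝ
      (fun k : Fin n =>
        (fun x : {x : Fin d → ℝ // ∀ k', K (ξ k') x ≠ 0} => (K (ξ k) x.1)⁻¹)) := by
  obtain rfl : K = fun t x => ∑ j, x j ^ 2 / (t - a j) := funext fun t => funext (hK t)
  let i : Fin d := ⟨0, by omega⟩
  let j : Fin d := ⟨1, by omega⟩
  have hij : a i < a j := ha (Fin.mk_lt_mk.2 zero_lt_one)
  let T := Set.Icc (a i) (a j) \ Set.range ξ
  have hK_eq : ∀ k, ∀ u : T, ∑ l, twoCoordinatePoint a i j u l ^ 2 / (ξ k - a l) =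
      (a i - a j) * (u - ξ k) / ((ξ k - a i) * (ξ k - a j)) := fun k u =>
    sum_sq_twoCoordinatePoint_div (ne_of_apply_ne a hij.ne) u.2.1 (hξa k i) (hξa k j)
  have hK_ne : ∀ u : T, ∀ k, ∑ l, twoCoordinatePoint a i j u l ^ 2 / (ξ k - a l) ≠ 0 :=
    fun u k => by
      rw [hK_eq]
      exact div_ne_zero
        (mul_ne_zero (sub_ne_zero.2 hij.ne) (sub_ne_zero.2 fun h => u.2.2 ⟨k, h.symm⟩))
        (mul_ne_zero (sub_ne_zero.2 (hξa k i)) (sub_ne_zero.2 (hξa k j)))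
  let φ : T → {x : Fin d → ℝ // ∀ k', ∑ l, x l ^ 2 / (ξ k' - a l) ≠ 0} :=
    fun u => ⟨twoCoordinatePoint a i j u, hK_ne u⟩
  have hw : ∀ k, (ξ k - a i) * (ξ k - a j) / (a i - a j) ≠ 0 := fun k =>
    div_ne_zero (mul_ne_zero (sub_ne_zero.2 (hξa k i)) (sub_ne_zero.2 (hξa k j)))
      (sub_ne_zero.2 hij.ne)
  have hcomp : LinearMap.funLeft ℝ ℝ φ ∘ (fun k x => (∑ l, x.1 l ^ 2 / (ξ k - a l))⁻¹) =
      (fun k => Units.mk0 _ (hw k)) • fun k (u : T) => ((u : ℝ) - ξ k)⁻¹ := by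
    ext k u
    simp only [Function.comp_apply, LinearMap.funLeft_apply, φ, hK_eq, inv_div, Pi.smul_apply',
      Pi.smul_apply, Units.smul_mk0, smul_eq_mul]
    rw [div_mul_eq_div_div, div_eq_mul_inv _ ((u : ℝ) - ξ k)]
  refine LinearIndependent.of_comp (LinearMap.funLeft ℝ ℝ φ) ?_
  rw [hcomp]
  exact (linearIndependent_inv_sub hξ
    ((Set.Icc_infinite hij).sdiff (Set.finite_range ξ))).units_smul _
end

section
/- Fix real numbers a₁ < … < a_d, n ∈ ℕ, ε ∈ {0,1}^d. On any unbounded connected component of the domain {ξ ∈ ℝ^n : ξ_k ≠ ξ_ℓ for k ≠ ℓ, ξ_k ≠ aⱼ} (i.e. a component on which some ξ_k lies outside [a₁, a_d]), the function φ(ξ) = −Σ_k Σⱼ (1+2εⱼ) log|ξ_k − aⱼ| − 4 Σ_k Σ_{ℓ≠k} log|ξ_k − ξ_ℓ| is unbounded below, and hence does not attain its infimum. -/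
open Finset Filter Topology

private lemma sum_bdd {ι : Type*} (s : Finset ι) (f : ι → ℝ → ℝ)
    (h : ∀ i ∈ s, ∃ c : ℝ, ∀ᶠ t in atTop, c ≤ f i t) :
    ∃ C : ℝ, ∀ᶠ t in atTop, C ≤ ∑ i ∈ s, f i t := by
  classical
  induction s using Finset.induction_on with
  | empty => exact ⟨0, Eventually.of_forall fun t => by simp⟩
  | @insert a s ha ih =>
    obtain ⟨c, hc⟩ := h a (Finset.mem_insert_self a s)
    obtain ⟨C, hC⟩ := ih (fun i hi => h i (Finset.mem_insert_of_mem hi))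
    refine ⟨c + C, ?_⟩
    filter_upwards [hc, hC] with t h1 h2
    rw [Finset.sum_insert ha]
    exact add_le_add h1 h2

private lemma add_tendsto' {f g : ℝ → ℝ} (hf : Tendsto f atTop atTop)
    (hg : ∃ c : ℝ, ∀ᶠ t in atTop, c ≤ g t) :
    Tendsto (fun t => f t + g t) atTop atTop := by
  obtain ⟨c, hc⟩ := hg
  refine tendsto_atTop_mono' _ ?_ (tendsto_atTop_add_const_right _ c hf)
  filter_upwards [hc] with t ht
  linarith

private lemma sum_tendsto' {ι : Type*} (s : Finset ι) (f : ι → ℝ → ℝ) (i₀ : ι) (hi₀ : i₀ ∈ s)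
    (h₀ : Tendsto (f i₀) atTop atTop)
    (h : ∀ i ∈ s, ∃ c : ℝ, ∀ᶠ t in atTop, c ≤ f i t) :
    Tendsto (fun t => ∑ i ∈ s, f i t) atTop atTop := by
  classical
  obtain ⟨C, hC⟩ := sum_bdd (s.erase i₀) f (fun i hi => h i (Finset.mem_of_mem_erase hi))
  have h1 : Tendsto (fun t => f i₀ t + C) atTop atTop := tendsto_atTop_add_const_right _ C h₀
  refine tendsto_atTop_mono' _ ?_ h1
  filter_upwards [hC] with t ht
  calc f i₀ t + C ≤ f i₀ t + ∑ i ∈ s.erase i₀, f i t := by linarith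
  _ = ∑ i ∈ s, f i t := Finset.add_sum_erase s (fun i => f i t) hi₀

private lemma log_tendsto' {v : ℝ → ℝ} (hv : Tendsto (fun t => |v t|) atTop atTop) (b : ℝ) :
    Tendsto (fun t => Real.log |v t - b|) atTop atTop := by
  have h1 : Tendsto (fun t => |v t - b|) atTop atTop := by
    refine tendsto_atTop_mono' _ ?_ (tendsto_atTop_add_const_right _ (-|b|) hv)
    filter_upwards with t
    have := abs_sub_abs_le_abs_sub (v t) b
    linarith
  exact Real.tendsto_log_atTop.comp h1

private lemma core {d n : ℕ} (hd : 1 ≤ d) (a : Fin d → ℝ) (ε : Fin d → ℕ)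
    (D : Set (Fin n → ℝ))
    (hD : D = {ξ | (∀ k ℓ, k ≠ ℓ → ξ k ≠ ξ ℓ) ∧ ∀ k j, ξ k ≠ a j})
    (φ : (Fin n → ℝ) → ℝ)
    (hφ : ∀ ξ : Fin n → ℝ, φ ξ =
      -(∑ k, ∑ j, (1 + 2 * (ε j : ℝ)) * Real.log |ξ k - a j|) -
        4 * ∑ k, ∑ ℓ ∈ univ \ {k}, Real.log |ξ k - ξ ℓ|)
    (x y : Fin n → ℝ) (hy : y ∈ connectedComponentIn D x)
    (k₀ : Fin n) (v : ℝ → ℝ) (hv : Continuous v) (hv0 : v 0 = y k₀)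
    (hmem : ∀ t, 0 ≤ t → (∀ j, v t ≠ a j) ∧ ∀ ℓ, ℓ ≠ k₀ → v t ≠ y ℓ)
    (hvt : Tendsto (fun t => |v t|) atTop atTop) (C : ℝ) :
    ∃ z ∈ connectedComponentIn D x, φ z < C := by
  classical
  have hyD := connectedComponentIn_subset D x hy
  rw [hD] at hyD
  obtain ⟨hy1, hy2⟩ := hyD
  set u : ℝ → Fin n → ℝ := fun t => Function.update y k₀ (v t) with hu
  have huapp : ∀ t i, u t i = if i = k₀ then v t else y i := by
    intro t i
    simp [hu, Function.update_apply]
  have hucont : Continuous u := by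
    apply continuous_pi
    intro i
    by_cases hik : i = k₀
    · simpa [huapp, hik] using hv
    · simp only [huapp, if_neg hik]
      exact continuous_const
  have huD : ∀ t, 0 ≤ t → u t ∈ D := by
    intro t ht
    obtain ⟨hm1, hm2⟩ := hmem t ht
    rw [hD]
    constructor
    · intro p q hpq
      by_cases hp : p = k₀ <;> by_cases hq : q = k₀
      · exact absurd (hp.trans hq.symm) hpq
      · rw [huapp, huapp, if_pos hp, if_neg hq]; exact hm2 q hq
      · rw [huapp, huapp, if_neg hp, if_pos hq]; exact (hm2 p hp).symm
      · rw [huapp, huapp, if_neg hp, if_neg hq]; exact hy1 p q hpq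
    · intro p j
      by_cases hp : p = k₀
      · rw [huapp, if_pos hp]; exact hm1 j
      · rw [huapp, if_neg hp]; exact hy2 p j
  have hucomp : ∀ t, 0 ≤ t → u t ∈ connectedComponentIn D x := by
    intro T hT
    have hS : IsPreconnected (u '' Set.Icc 0 T) :=
      isPreconnected_Icc.image u hucont.continuousOn
    have hyS : y ∈ u '' Set.Icc 0 T := by
      refine ⟨0, ⟨le_refl 0, hT⟩, ?_⟩
      funext i
      rw [huapp]
      by_cases hik : i = k₀
      · rw [if_pos hik, hv0, hik]
      · rw [if_neg hik]
    have hSD : u '' Set.Icc 0 T ⊆ D := by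
      rintro _ ⟨s, hs, rfl⟩
      exact huD s hs.1
    have hsub := hS.subset_connectedComponentIn hyS hSD
    have h2 : u T ∈ connectedComponentIn D y := hsub ⟨T, ⟨hT, le_refl T⟩, rfl⟩
    rwa [← connectedComponentIn_eq hy] at h2
  -- the energy along the path
  set G : Fin n → ℝ → ℝ := fun k t =>
    (∑ j, (1 + 2 * (ε j : ℝ)) * Real.log |u t k - a j|) +
      4 * ∑ ℓ ∈ univ \ {k}, Real.log |u t k - u t ℓ| with hG
  have hφu : ∀ t, φ (u t) = -∑ k, G k t := by
    intro t
    rw [hφ]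
    simp only [hG]
    rw [Finset.sum_add_distrib, ← Finset.mul_sum]
    ring
  have hcoef : ∀ j : Fin d, (0:ℝ) < 1 + 2 * (ε j : ℝ) := by
    intro j
    positivity
  have hG₀ : Tendsto (G k₀) atTop atTop := by
    have hG₀eq : G k₀ = fun t =>
        (∑ j, (1 + 2 * (ε j : ℝ)) * Real.log |v t - a j|) +
          4 * ∑ ℓ ∈ univ \ {k₀}, Real.log |v t - y ℓ| := by
      funext t
      simp only [hG]
      congr 1
      · refine Finset.sum_congr rfl fun j _ => ?_
        rw [huapp, if_pos rfl]
      · congr 1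
        refine Finset.sum_congr rfl fun ℓ hℓ => ?_
        have hℓk : ℓ ≠ k₀ := by simpa using hℓ
        rw [huapp, huapp, if_pos rfl, if_neg hℓk]
    rw [hG₀eq]
    apply add_tendsto'
    · refine sum_tendsto' univ _ ⟨0, hd⟩ (Finset.mem_univ _) ?_ ?_
      · exact (log_tendsto' hvt (a ⟨0, hd⟩)).const_mul_atTop (hcoef ⟨0, hd⟩)
      · intro j _
        exact ⟨0, ((log_tendsto' hvt (a j)).const_mul_atTop (hcoef j)).eventually_ge_atTop 0⟩
    · obtain ⟨c, hc⟩ := sum_bdd (univ \ {k₀}) (fun ℓ t => Real.log |v t - y ℓ|)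
        (fun ℓ _ => ⟨0, (log_tendsto' hvt (y ℓ)).eventually_ge_atTop 0⟩)
      refine ⟨4 * c, ?_⟩
      filter_upwards [hc] with t ht
      linarith
  have hGk : ∀ k ∈ (univ : Finset (Fin n)), ∃ c : ℝ, ∀ᶠ t in atTop, c ≤ G k t := by
    intro k _
    by_cases hk : k = k₀
    · exact ⟨0, (hk ▸ hG₀).eventually_ge_atTop 0⟩
    · have hGkeq : G k = fun t =>
          (∑ j, (1 + 2 * (ε j : ℝ)) * Real.log |y k - a j|) +
            4 * ∑ ℓ ∈ univ \ {k}, Real.log |y k - u t ℓ| := by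
        funext t
        simp only [hG]
        congr 1
        · refine Finset.sum_congr rfl fun j _ => ?_
          rw [huapp, if_neg hk]
        · congr 1
          refine Finset.sum_congr rfl fun ℓ _ => ?_
          rw [huapp (i := k), if_neg hk]
      have hbnd : ∀ ℓ ∈ univ \ {k}, ∃ c : ℝ, ∀ᶠ t in atTop,
          c ≤ (fun ℓ t => Real.log |y k - u t ℓ|) ℓ t := by
        intro ℓ _
        by_cases hℓ : ℓ = k₀
        · subst hℓ
          refine ⟨0, ?_⟩
          filter_upwards [(log_tendsto' hvt (y k)).eventually_ge_atTop 0] with t ht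
          rwa [huapp, if_pos rfl, abs_sub_comm]
        · refine ⟨Real.log |y k - y ℓ|, ?_⟩
          filter_upwards with t
          simp only [huapp, if_neg hℓ]
          exact le_refl _
      obtain ⟨c, hc⟩ := sum_bdd (univ \ {k}) (fun ℓ t => Real.log |y k - u t ℓ|) hbnd
      refine ⟨(∑ j, (1 + 2 * (ε j : ℝ)) * Real.log |y k - a j|) + 4 * c, ?_⟩
      rw [hGkeq]
      filter_upwards [hc] with t ht
      have : (4:ℝ) * c ≤ 4 * ∑ ℓ ∈ univ \ {k}, Real.log |y k - u t ℓ| := by linarith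
      linarith
  have htend : Tendsto (fun t => φ (u t)) atTop atBot := by
    have h1 : Tendsto (fun t => ∑ k, G k t) atTop atTop :=
      sum_tendsto' univ G k₀ (Finset.mem_univ k₀) hG₀ hGk
    have h2 : Tendsto (fun t => -∑ k, G k t) atTop atBot := tendsto_neg_atTop_atBot.comp h1
    refine h2.congr fun t => (hφu t).symm
  obtain ⟨t, htC, ht0⟩ := ((htend.eventually (eventually_lt_atBot C)).and
    (eventually_ge_atTop (0:ℝ))).exists
  exact ⟨u t, hucomp t ht0, htC⟩

/-- On any unbounded connected component of the domain (i.e. one containing a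
point with some coordinate outside `[a₁, a_d]`), the logarithmic energy `φ` is unbounded below,
and hence does not attain its infimum. -/
theorem stmt8 {d n : ℕ} (hd : 1 ≤ d) (a : Fin d → ℝ) (ha : StrictMono a)
    (ε : Fin d → ℕ) (hε : ∀ j, ε j ≤ 1)
    (D : Set (Fin n → ℝ))
    (hD : D = {ξ | (∀ k ℓ, k ≠ ℓ → ξ k ≠ ξ ℓ) ∧ ∀ k j, ξ k ≠ a j})
    (φ : (Fin n → ℝ) → ℝ)
    (hφ : ∀ ξ : Fin n → ℝ, φ ξ =
      -(∑ k, ∑ j, (1 + 2 * (ε j : ℝ)) * Real.log |ξ k - a j|) -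
        4 * ∑ k, ∑ ℓ ∈ univ \ {k}, Real.log |ξ k - ξ ℓ|)
    (x : Fin n → ℝ) (hx : x ∈ D)
    (hunbdd : ∃ y ∈ connectedComponentIn D x, ∃ k,
      y k < a ⟨0, hd⟩ ∨ a ⟨d - 1, by omega⟩ < y k) :
    ¬ BddBelow (φ '' connectedComponentIn D x) ∧
    ¬ ∃ m ∈ connectedComponentIn D x, IsMinOn φ (connectedComponentIn D x) m := by
  classical
  obtain ⟨y, hy, k, hk⟩ := hunbdd
  have hyD := connectedComponentIn_subset D x hy
  rw [hD] at hyD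
  obtain ⟨hy1, hy2⟩ := hyD
  have key : ∀ C : ℝ, ∃ z ∈ connectedComponentIn D x, φ z < C := by
    intro C
    rcases hk with hk | hk
    · -- minimum coordinate goes to -∞
      obtain ⟨k₀, -, hk₀⟩ := Finset.exists_min_image univ y ⟨k, Finset.mem_univ k⟩
      have hlt : ∀ j, y k₀ < a j := by
        intro j
        have h1 : a ⟨0, hd⟩ ≤ a j := ha.monotone (by simp [Fin.le_def])
        have h2 : y k₀ ≤ y k := hk₀ k (Finset.mem_univ k)
        linarith
      refine core hd a ε D hD φ hφ x y hy k₀ (fun t => y k₀ - t) (by fun_prop) (by simp)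
        ?_ ?_ C
      · intro t ht
        constructor
        · intro j
          have := hlt j
          show y k₀ - t ≠ a j
          exact ne_of_lt (by linarith)
        · intro ℓ hℓ
          have hne : y k₀ ≠ y ℓ := hy1 k₀ ℓ (fun h => hℓ h.symm)
          have h1 : y k₀ < y ℓ := lt_of_le_of_ne (hk₀ ℓ (Finset.mem_univ ℓ)) hne
          show y k₀ - t ≠ y ℓ
          exact ne_of_lt (by linarith)
      · have h1 : Tendsto (fun t : ℝ => y k₀ - t) atTop atBot := by
          simpa [sub_eq_add_neg] using
            tendsto_atBot_add_const_left atTop (y k₀) (tendsto_neg_atTop_atBot : Tendsto (fun t : ℝ => -t) atTop atBot)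
        exact tendsto_abs_atBot_atTop.comp h1
    · -- maximum coordinate goes to +∞
      obtain ⟨k₀, -, hk₀⟩ := Finset.exists_max_image univ y ⟨k, Finset.mem_univ k⟩
      have hlt : ∀ j, a j < y k₀ := by
        intro j
        have h1 : a j ≤ a ⟨d - 1, by omega⟩ := ha.monotone (by simp [Fin.le_def]; omega)
        have h2 : y k ≤ y k₀ := hk₀ k (Finset.mem_univ k)
        linarith
      refine core hd a ε D hD φ hφ x y hy k₀ (fun t => y k₀ + t) (by fun_prop) (by simp)
        ?_ ?_ C
      · intro t ht
        constructor
        · intro j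
          have := hlt j
          show y k₀ + t ≠ a j
          exact (ne_of_lt (by linarith)).symm
        · intro ℓ hℓ
          have hne : y ℓ ≠ y k₀ := hy1 ℓ k₀ hℓ
          have h1 : y ℓ < y k₀ := lt_of_le_of_ne (hk₀ ℓ (Finset.mem_univ ℓ)) hne
          show y k₀ + t ≠ y ℓ
          exact (ne_of_lt (by linarith)).symm
      · have h1 : Tendsto (fun t : ℝ => y k₀ + t) atTop atTop :=
          tendsto_atTop_add_const_left atTop (y k₀) tendsto_id
        exact tendsto_abs_atTop_atTop.comp h1
  have hnb : ¬ BddBelow (φ '' connectedComponentIn D x) := by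
    rintro ⟨b, hb⟩
    obtain ⟨z, hz, hzlt⟩ := key b
    exact absurd (hb ⟨z, hz, rfl⟩) (not_le.mpr hzlt)
  refine ⟨hnb, ?_⟩
  rintro ⟨m, hm, hmin⟩
  exact hnb ⟨φ m, by rintro w ⟨z, hz, rfl⟩; exact isMinOn_iff.mp hmin z hz⟩
end

section
/- Let δ > 0, n ≥ 1, and suppose ξ ∈ ℝⁿ has pairwise distinct components, all in ℝ∖{−1,1}, satisfying δ/(ξ_k − 1) + δ/(ξ_k + 1) + 4 Σ_{ℓ≠k} 1/(ξ_k − ξ_ℓ) = 0 for all k. Define A ∈ ℝ^{n×n} by A_{kk} = 4 Σ_{ℓ'≠k}(ξ_k − ξ_{ℓ'})^{−2} + δ(ξ_k − 1)^{−2} + δ(ξ_k + 1)^{−2} and A_{kℓ} = −4(ξ_k − ξ_ℓ)^{−2} for k ≠ ℓ, and set v = ((1+ξ_k)/(2δ))_k. Then A v = ((ξ_k − 1)^{−2})_k. -/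
open Finset

/-- first identity of the miracle lemma. If `ξ` solves the equilibrium
equations with parameter `δ > 0`, then `A v = ((ξₖ − 1)⁻²)ₖ` for `v = ((1+ξₖ)/(2δ))ₖ`. -/
theorem stmt11 {n : ℕ} (hn : 1 ≤ n) (δ : ℝ) (hδ : 0 < δ)
    (ξ : Fin n → ℝ) (hξ : Function.Injective ξ)
    (hξ1 : ∀ k, ξ k ≠ 1 ∧ ξ k ≠ -1)
    (heq : ∀ k, δ / (ξ k - 1) + δ / (ξ k + 1) +
      4 * ∑ ℓ ∈ univ \ {k}, 1 / (ξ k - ξ ℓ) = 0)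
    (A : Matrix (Fin n) (Fin n) ℝ)
    (hA : ∀ k ℓ, A k ℓ =
      if k = ℓ then
        4 * ∑ ℓ' ∈ univ \ {k}, ((ξ k - ξ ℓ') ^ 2)⁻¹ +
          δ * ((ξ k - 1) ^ 2)⁻¹ + δ * ((ξ k + 1) ^ 2)⁻¹
      else -(4 * ((ξ k - ξ ℓ) ^ 2)⁻¹)) :
    A.mulVec (fun k => (1 + ξ k) / (2 * δ)) = fun k => ((ξ k - 1) ^ 2)⁻¹ := by
  funext k
  have hδ0 : δ ≠ 0 := ne_of_gt hδ
  have h1 : ξ k - 1 ≠ 0 := sub_ne_zero.mpr (hξ1 k).1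
  have h2 : ξ k + 1 ≠ 0 := by
    intro h; exact (hξ1 k).2 (by linarith)
  set S1 : ℝ := ∑ ℓ' ∈ univ \ {k}, ((ξ k - ξ ℓ') ^ 2)⁻¹ with hS1
  set S2 : ℝ := ∑ ℓ' ∈ univ \ {k}, (ξ k - ξ ℓ')⁻¹ with hS2
  have heqk : S2 = -(δ / (ξ k - 1) + δ / (ξ k + 1)) / 4 := by
    have := heq k
    simp only [one_div] at this
    rw [← hS2] at this
    linarith
  have hterm : ∀ ℓ ∈ univ \ {k}, A k ℓ * ((1 + ξ ℓ) / (2 * δ)) =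
      (-(4 * (1 + ξ k)) / (2 * δ)) * ((ξ k - ξ ℓ) ^ 2)⁻¹ +
        (4 / (2 * δ)) * (ξ k - ξ ℓ)⁻¹ := by
    intro ℓ hℓ
    have hne : ℓ ≠ k := by simpa using (Finset.mem_sdiff.mp hℓ).2
    have hdne : ξ k - ξ ℓ ≠ 0 := sub_ne_zero.mpr (fun h => hne (hξ h).symm)
    rw [hA k ℓ, if_neg (fun h => hne h.symm)]
    field_simp
    ring
  have hsplit : ∑ ℓ, A k ℓ * ((1 + ξ ℓ) / (2 * δ)) =
      (∑ ℓ ∈ univ \ {k}, A k ℓ * ((1 + ξ ℓ) / (2 * δ))) +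
        A k k * ((1 + ξ k) / (2 * δ)) := by
    rw [Finset.sum_eq_sum_sdiff_singleton_add (Finset.mem_univ k)]
  have hoff : ∑ ℓ ∈ univ \ {k}, A k ℓ * ((1 + ξ ℓ) / (2 * δ)) =
      (-(4 * (1 + ξ k)) / (2 * δ)) * S1 + (4 / (2 * δ)) * S2 := by
    rw [Finset.sum_congr rfl hterm, Finset.sum_add_distrib, ← Finset.mul_sum,
      ← Finset.mul_sum]
  have hkey : ∑ ℓ, A k ℓ * ((1 + ξ ℓ) / (2 * δ)) = ((ξ k - 1) ^ 2)⁻¹ := by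
    rw [hsplit, hoff, hA k k, if_pos rfl, ← hS1, heqk]
    field_simp
    ring
  simpa [Matrix.mulVec, dotProduct] using hkey
end

section
/- Let δ > 0, n ≥ 1, and suppose ξ ∈ ℝⁿ has pairwise distinct components, all in ℝ∖{−1,1}, satisfying δ/(ξ_k − 1) + δ/(ξ_k + 1) + 4 Σ_{ℓ≠k} 1/(ξ_k − ξ_ℓ) = 0 for all k. Define A as in the miracle lemma (A_{kk} = 4 Σ_{ℓ'≠k}(ξ_k − ξ_{ℓ'})^{−2} + δ(ξ_k − 1)^{−2} + δ(ξ_k + 1)^{−2}, A_{kℓ} = −4(ξ_k − ξ_ℓ)^{−2} for k ≠ ℓ), and set w = ((1 − ξ_k²)/(4(n−1) + 2δ))_k. Then A w = (1,…,1)ᵀ. -/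
open Finset

/-- second identity of the miracle lemma. If `ξ` solves the equilibrium
equations with parameter `δ > 0`, then `A w = (1,…,1)ᵀ` for `w = ((1−ξₖ²)/(4(n−1)+2δ))ₖ`. -/
theorem stmt12 {n : ℕ} (hn : 1 ≤ n) (δ : ℝ) (hδ : 0 < δ)
    (ξ : Fin n → ℝ) (hξ : Function.Injective ξ)
    (hξ1 : ∀ k, ξ k ≠ 1 ∧ ξ k ≠ -1)
    (heq : ∀ k, δ / (ξ k - 1) + δ / (ξ k + 1) +
      4 * ∑ ℓ ∈ univ \ {k}, 1 / (ξ k - ξ ℓ) = 0)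
    (A : Matrix (Fin n) (Fin n) ℝ)
    (hA : ∀ k ℓ, A k ℓ =
      if k = ℓ then
        4 * ∑ ℓ' ∈ univ \ {k}, ((ξ k - ξ ℓ') ^ 2)⁻¹ +
          δ * ((ξ k - 1) ^ 2)⁻¹ + δ * ((ξ k + 1) ^ 2)⁻¹
      else -(4 * ((ξ k - ξ ℓ) ^ 2)⁻¹)) :
    A.mulVec (fun k => (1 - ξ k ^ 2) / (4 * ((n : ℝ) - 1) + 2 * δ)) = fun _ => 1 := by
  have hn' : (1:ℝ) ≤ (n:ℝ) := by exact_mod_cast hn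
  have hC : (4 * ((n:ℝ) - 1) + 2 * δ) ≠ 0 := by nlinarith
  funext k
  have hkm : ξ k - 1 ≠ 0 := sub_ne_zero.mpr (hξ1 k).1
  have hkp : ξ k + 1 ≠ 0 := by
    intro h; exact (hξ1 k).2 (by linarith)
  have hd : ∀ ℓ ∈ univ \ {k}, ξ k - ξ ℓ ≠ 0 := by
    intro ℓ hℓ
    simp only [mem_sdiff, mem_singleton] at hℓ
    exact sub_ne_zero.mpr fun h => hℓ.2 (hξ h).symm
  have hcard : ((univ \ {k} : Finset (Fin n)).card : ℝ) = (n:ℝ) - 1 := by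
    rw [Finset.card_sdiff_of_subset (Finset.subset_univ _), Finset.card_singleton, Finset.card_univ,
      Fintype.card_fin, Nat.cast_sub hn, Nat.cast_one]
  have hS := heq k
  set S := ∑ ℓ ∈ univ \ {k}, 1 / (ξ k - ξ ℓ) with hSdef
  have hSval : S = -(δ / (ξ k - 1) + δ / (ξ k + 1)) / 4 := by linarith
  have key : ∑ ℓ, A k ℓ * (1 - ξ ℓ ^ 2) = 4 * ((n:ℝ) - 1) + 2 * δ := by
    rw [Finset.sum_eq_sum_sdiff_singleton_add (Finset.mem_univ k)]
    rw [hA k k, if_pos rfl]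
    have expand : (4 * ∑ ℓ' ∈ univ \ {k}, ((ξ k - ξ ℓ') ^ 2)⁻¹ +
          δ * ((ξ k - 1) ^ 2)⁻¹ + δ * ((ξ k + 1) ^ 2)⁻¹) * (1 - ξ k ^ 2)
        = (∑ ℓ' ∈ univ \ {k}, 4 * ((ξ k - ξ ℓ') ^ 2)⁻¹ * (1 - ξ k ^ 2)) +
          (δ * ((ξ k - 1) ^ 2)⁻¹ + δ * ((ξ k + 1) ^ 2)⁻¹) * (1 - ξ k ^ 2) := by
      simp only [add_mul, Finset.sum_mul, Finset.mul_sum, mul_assoc]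
      ring
    rw [expand, ← add_assoc, ← Finset.sum_add_distrib]
    have h1 : ∑ ℓ ∈ univ \ {k}, (A k ℓ * (1 - ξ ℓ ^ 2) + 4 * ((ξ k - ξ ℓ) ^ 2)⁻¹ * (1 - ξ k ^ 2))
        = ∑ ℓ ∈ univ \ {k}, (4 - 8 * ξ k * (1 / (ξ k - ξ ℓ))) := by
      refine Finset.sum_congr rfl fun ℓ hℓ => ?_
      have hℓk : k ≠ ℓ := by
        simp only [mem_sdiff, mem_singleton] at hℓ
        exact fun h => hℓ.2 h.symm
      rw [hA k ℓ, if_neg hℓk]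
      have hdl := hd ℓ hℓ
      field_simp
      ring
    rw [h1, Finset.sum_sub_distrib, Finset.sum_const, nsmul_eq_mul, ← Finset.mul_sum,
      ← hSdef, hcard, hSval]
    field_simp
    ring
  show ∑ ℓ, A k ℓ * ((1 - ξ ℓ ^ 2) / (4 * ((n : ℝ) - 1) + 2 * δ)) = 1
  simp_rw [← mul_div_assoc]
  rw [← Finset.sum_div, key, div_self hC]
end

section
/- For integers 0 ≤ ν ≤ μ, let p(x) = (d/dx)^{μ+ν}(x² − 1)^μ. Then p(1) = C(μ+ν, ν) · (μ!)²/(μ−ν)! · 2^{μ−ν} and (if ν < μ) p'(1) = C(μ+ν+1, ν+1) · (μ!)²/(μ−ν−1)! · 2^{μ−ν−1}, where C(·,·) denotes binomial coefficients. -/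
open Finset Polynomial

lemma iteratedDeriv_polyEval (P : Polynomial ℝ) (n : ℕ) :
    iteratedDeriv n (fun x : ℝ => P.eval x) = fun x => (derivative^[n] P).eval x := by
  induction n with
  | zero => simp
  | succ n ih =>
    rw [iteratedDeriv_succ, ih, Function.iterate_succ_apply']
    funext x
    exact Polynomial.deriv _

lemma key (μ ν : ℕ) (hν : ν ≤ μ) :
    iteratedDeriv (μ + ν) (fun x : ℝ => (x ^ 2 - 1) ^ μ) 1
      = ((μ + ν).choose ν : ℝ) * ((μ.factorial : ℝ) ^ 2 / ((μ - ν).factorial : ℝ))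
        * 2 ^ (μ - ν) := by
  have hfun : (fun x : ℝ => (x ^ 2 - 1) ^ μ)
      = fun x => (((X - C 1) ^ μ * (X + C 1) ^ μ : Polynomial ℝ)).eval x := by
    funext x
    simp [← mul_pow]
    ring_nf
  rw [hfun, iteratedDeriv_polyEval, Polynomial.iterate_derivative_mul]
  simp only []
  rw [Polynomial.eval_finset_sum]
  rw [Finset.sum_eq_single ν]
  · rw [show μ + ν - ν = μ by omega]
    simp only [Polynomial.iterate_derivative_X_sub_pow, Polynomial.iterate_derivative_X_add_pow,
      smul_smul, Polynomial.eval_smul, smul_eq_mul, Polynomial.eval_mul, Polynomial.eval_pow,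
      Polynomial.eval_sub, Polynomial.eval_add, Polynomial.eval_X, Polynomial.eval_one,
      Polynomial.eval_C]
    rw [Nat.sub_self, pow_zero, Nat.descFactorial_self]
    have h1 : (μ + ν).choose ν = (μ + ν).choose μ := by
      rw [Nat.choose_symm_add]
    have h2 : (μ - ν).factorial * μ.descFactorial ν = μ.factorial :=
      Nat.factorial_mul_descFactorial hν
    have h3 : ((μ - ν).factorial : ℝ) ≠ 0 := by positivity
    field_simp
    push_cast [← h2, ← h1]
    norm_num
    ring
  · intro k hk hkν
    simp only [Polynomial.iterate_derivative_X_sub_pow, Polynomial.iterate_derivative_X_add_pow,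
      smul_smul, Polynomial.eval_smul, smul_eq_mul, Polynomial.eval_mul, Polynomial.eval_pow,
      Polynomial.eval_sub, Polynomial.eval_add, Polynomial.eval_X, Polynomial.eval_one,
      Polynomial.eval_C]
    rcases lt_or_gt_of_ne hkν with h | h
    · -- k < ν, so μ + ν - k > μ, descFactorial μ (μ+ν-k) = 0
      rw [Nat.descFactorial_eq_zero_iff_lt.mpr (by omega)]
      simp
    · -- k > ν, so μ + ν - k < μ, (1-1)^(μ - (μ+ν-k)) = 0 since exponent > 0
      rw [sub_self, zero_pow (by simp at hk; omega)]
      simp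
  · intro h
    exact absurd (Finset.mem_range.mpr (by omega)) h

/-- For `0 ≤ ν ≤ μ` and `p(x) = (d/dx)^{μ+ν}(x²−1)^μ`, one has
`p(1) = C(μ+ν, ν) (μ!)²/(μ−ν)! · 2^{μ−ν}` and, if `ν < μ`,
`p'(1) = C(μ+ν+1, ν+1) (μ!)²/(μ−ν−1)! · 2^{μ−ν−1}`. -/
theorem stmt13 (μ ν : ℕ) (hν : ν ≤ μ)
    (p : ℝ → ℝ) (hp : p = iteratedDeriv (μ + ν) (fun x : ℝ => (x ^ 2 - 1) ^ μ)) :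
    p 1 = ((μ + ν).choose ν : ℝ) * ((μ.factorial : ℝ) ^ 2 / ((μ - ν).factorial : ℝ)) *
        2 ^ (μ - ν) ∧
    (ν < μ → deriv p 1 =
      ((μ + ν + 1).choose (ν + 1) : ℝ) *
        ((μ.factorial : ℝ) ^ 2 / ((μ - ν - 1).factorial : ℝ)) * 2 ^ (μ - ν - 1)) := by
  subst hp
  constructor
  · exact key μ ν hν
  · intro h
    have := key μ (ν + 1) (by omega)
    rw [← iteratedDeriv_succ, show μ + ν + 1 = μ + (ν + 1) by ring]
    rw [this, show μ - ν - 1 = μ - (ν + 1) by omega]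
end

section
/- For integers 0 ≤ ν < μ, let Z be the multiset of roots of p(x) = (d/dx)^{μ+ν}(x² − 1)^μ that are not equal to ±1 (i.e. all roots of p, counted with multiplicity). Then Σ_{ζ ∈ Z} 1/(2 − 2ζ²) = (μ − ν)(μ + ν + 1)/(4(ν + 1)). -/
/-!
The polynomial `p` has all its `μ - ν` roots real (Rolle, applied `μ + ν` times to
`(X - 1)^μ (X + 1)^μ`), so `p'(x)/p(x) = ∑ 1/(x - ζ)` off the roots, and the sum in question is
`(p'(1)/p(1) - p'(-1)/p(-1)) / 4` by partial fractions. By Leibniz' rule the values of `p` and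
`p'` at `±1` are explicit products of binomial coefficients, factorials and powers of `±2`.
-/

open Polynomial
open scoped Nat

namespace Polynomial

-- Rolle's theorem: between consecutive roots of `f` lies a root of `f'`.
theorem Splits.derivative_of_real {f : ℝ[X]} (hf : f.Splits) : f.derivative.Splits := by
  rw [splits_iff_card_roots] at hf ⊢
  have rolle := card_roots_le_derivative f
  have hdeg := natDegree_derivative_le f
  have hcard := f.derivative.card_roots'
  omega

theorem Splits.iterate_derivative_of_real {f : ℝ[X]} (hf : f.Splits) (k : ℕ) :
    (derivative^[k] f).Splits := by
  induction k with
  | zero => exact hf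
  | succ k ih => simpa only [Function.iterate_succ_apply'] using ih.derivative_of_real

variable {R : Type*} [CommRing R]

-- In Leibniz' rule only the term differentiating `(X - C a) ^ n` exactly `n` times survives at `a`.
theorem eval_iterate_derivative_mul_X_sub_C_pow (f : R[X]) (a : R) {n m : ℕ} (h : n ≤ m) :
    eval a (derivative^[m] (f * (X - C a) ^ n)) =
      m.choose n * n ! * eval a (derivative^[m - n] f) := by
  have eval_term (k : ℕ) : eval a (m.choose k •
      (derivative^[m - k] f * derivative^[k] ((X - C a) ^ n))) =
      m.choose k * (eval a (derivative^[m - k] f) * (n.descFactorial k * 0 ^ (n - k))) := by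
    simp [iterate_derivative_X_sub_pow]
  rw [iterate_derivative_mul, eval_finsetSum, Finset.sum_eq_single n]
  · rw [eval_term, Nat.sub_self, pow_zero, Nat.descFactorial_self]
    ring
  · intro k _ hkn
    rw [eval_term]
    rcases hkn.lt_or_gt with hlt | hgt
    · rw [zero_pow (by omega)]
      simp
    · rw [Nat.descFactorial_eq_zero_iff_lt.2 hgt]
      simp
  · intro hn
    exact absurd (Finset.mem_range.2 (Nat.lt_succ_of_le h)) hn

theorem eval_iterate_derivative_X_sub_C_pow_mul_X_sub_C_pow (a b : R) (μ ν : ℕ) :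
    eval a (derivative^[μ + ν] ((X - C b) ^ μ * (X - C a) ^ μ)) =
      (μ + ν).choose μ * μ ! * μ.descFactorial ν * (a - b) ^ (μ - ν) := by
  rw [eval_iterate_derivative_mul_X_sub_C_pow _ _ (Nat.le_add_right μ ν), Nat.add_sub_cancel_left,
    iterate_derivative_X_sub_pow]
  simp only [nsmul_eq_mul, eval_mul, eval_natCast, eval_pow, eval_sub, eval_X, eval_C]
  ring

theorem eval_iterate_derivative_X_sub_C_pow_mul_X_sub_C_pow_ne_zero {K : Type*} [Field K]
    [CharZero K] {a b : K} (hab : a ≠ b) {μ ν : ℕ} (hν : ν ≤ μ) :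
    eval a (derivative^[μ + ν] ((X - C b) ^ μ * (X - C a) ^ μ)) ≠ 0 := by
  have hchoose : ((μ + ν).choose μ : K) ≠ 0 := by
    exact_mod_cast (Nat.choose_pos (Nat.le_add_right μ ν)).ne'
  have hdesc : (μ.descFactorial ν : K) ≠ 0 := by
    exact_mod_cast (Nat.descFactorial_pos.2 hν).ne'
  rw [eval_iterate_derivative_X_sub_C_pow_mul_X_sub_C_pow]
  exact mul_ne_zero (mul_ne_zero (mul_ne_zero hchoose (mod_cast μ.factorial_ne_zero)) hdesc)
    (pow_ne_zero _ (sub_ne_zero.2 hab))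

theorem eval_derivative_div_eval_iterate_derivative_X_sub_C_pow_mul_X_sub_C_pow {K : Type*}
    [Field K] [CharZero K] {a b : K} (hab : a ≠ b) {μ ν : ℕ} (hν : ν < μ) :
    eval a (derivative (derivative^[μ + ν] ((X - C b) ^ μ * (X - C a) ^ μ))) /
        eval a (derivative^[μ + ν] ((X - C b) ^ μ * (X - C a) ^ μ)) =
      (μ + ν + 1) * (μ - ν) / ((ν + 1) * (a - b)) := by
  have hchoose : ((μ + ν).choose μ : K) * (μ + ν + 1) = ((μ + ν + 1).choose μ) * (ν + 1) := by
    exact_mod_cast (Nat.choose_mul_succ_eq (μ + ν) μ).trans (by congr 1; omega)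
  have hpow : (a - b) ^ (μ - ν) = (a - b) * (a - b) ^ (μ - (ν + 1)) := by
    rw [← pow_succ']
    congr 1
    omega
  rw [div_eq_div_iff (eval_iterate_derivative_X_sub_C_pow_mul_X_sub_C_pow_ne_zero hab hν.le)
      (mul_ne_zero (Nat.cast_add_one_ne_zero ν) (sub_ne_zero.2 hab)),
    ← Function.iterate_succ_apply' derivative, Nat.succ_eq_add_one, add_assoc,
    eval_iterate_derivative_X_sub_C_pow_mul_X_sub_C_pow,
    eval_iterate_derivative_X_sub_C_pow_mul_X_sub_C_pow, hpow, Nat.descFactorial_succ,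
    Nat.cast_mul, Nat.cast_sub hν.le]
  linear_combination
    -(μ ! * μ.descFactorial ν * (μ - ν) * (a - b) * (a - b) ^ (μ - (ν + 1)) : K) * hchoose

theorem Splits.sum_roots_one_div_two_sub_two_mul_sq {K : Type*} [Field K] [NeZero (2 : K)]
    {f : K[X]} (hf : f.Splits) (h1 : f.eval 1 ≠ 0) (hm1 : f.eval (-1) ≠ 0) :
    (f.roots.map fun ζ ↦ 1 / (2 - 2 * ζ ^ 2)).sum =
      (f.derivative.eval 1 / f.eval 1 - f.derivative.eval (-1) / f.eval (-1)) / 4 := by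
  rw [hf.eval_derivative_div_eval_of_ne_zero h1, hf.eval_derivative_div_eval_of_ne_zero hm1,
    ← Multiset.sum_map_sub, ← Multiset.sum_map_div]
  refine congrArg Multiset.sum (Multiset.map_congr rfl fun ζ hζ ↦ ?_)
  have hζ1 : 1 - ζ ≠ 0 := sub_ne_zero.2 fun h ↦ h1 (h ▸ isRoot_of_mem_roots hζ)
  have hζm1 : -1 - ζ ≠ 0 := sub_ne_zero.2 fun h ↦ hm1 (h ▸ isRoot_of_mem_roots hζ)
  have : 2 - 2 * ζ ^ 2 = -2 * ((1 - ζ) * (-1 - ζ)) := by ring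
  have h4 : (4 : K) ≠ 0 := by
    rw [show (4 : K) = 2 * 2 by norm_num]
    exact mul_ne_zero two_ne_zero two_ne_zero
  rw [this]
  field_simp
  ring

end Polynomial

/-- For `0 ≤ ν < μ` and `p(x) = (d/dx)^{μ+ν}(x²−1)^μ`, the sum of
`1/(2 − 2ζ²)` over the roots `ζ` of `p` (with multiplicity; none equal `±1`) is
`(μ−ν)(μ+ν+1)/(4(ν+1))`. -/
theorem stmt14 (μ ν : ℕ) (hν : ν < μ)
    (p : Polynomial ℝ)
    (hp : p = (Polynomial.derivative^[μ + ν]) ((X ^ 2 - 1 : Polynomial ℝ) ^ μ)) :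
    (p.roots.map (fun ζ => 1 / (2 - 2 * ζ ^ 2))).sum =
      ((μ : ℝ) - ν) * ((μ : ℝ) + ν + 1) / (4 * ((ν : ℝ) + 1)) := by
  have hfactor : (X ^ 2 - 1 : ℝ[X]) ^ μ = (X - C (-1)) ^ μ * (X - C 1) ^ μ := by
    rw [← mul_pow, C_neg, C_1]
    ring
  have hfactor' : (X ^ 2 - 1 : ℝ[X]) ^ μ = (X - C 1) ^ μ * (X - C (-1)) ^ μ := by
    rw [hfactor, mul_comm]
  have hsplits : p.Splits := by
    rw [hp, hfactor]
    exact (((Splits.X_sub_C _).pow μ).mul ((Splits.X_sub_C _).pow μ)).iterate_derivative_of_real _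
  have heval_one : eval 1 p ≠ 0 := by
    rw [hp, hfactor]
    exact eval_iterate_derivative_X_sub_C_pow_mul_X_sub_C_pow_ne_zero (by norm_num) hν.le
  have heval_neg_one : eval (-1) p ≠ 0 := by
    rw [hp, hfactor']
    exact eval_iterate_derivative_X_sub_C_pow_mul_X_sub_C_pow_ne_zero (by norm_num) hν.le
  have hratio_one := eval_derivative_div_eval_iterate_derivative_X_sub_C_pow_mul_X_sub_C_pow
    (a := (1 : ℝ)) (b := -1) (by norm_num) hν
  have hratio_neg_one := eval_derivative_div_eval_iterate_derivative_X_sub_C_pow_mul_X_sub_C_pow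
    (a := (-1 : ℝ)) (b := 1) (by norm_num) hν
  rw [← hfactor, ← hp] at hratio_one
  rw [← hfactor', ← hp] at hratio_neg_one
  rw [hsplits.sum_roots_one_div_two_sub_two_mul_sq heval_one heval_neg_one, hratio_one,
    hratio_neg_one]
  field_simp
  ring
end

section
/- Let m₁ ≥ 1 and ε₁ ∈ {0,1}, and suppose the natural numbers M = 2|m| + |ε| and q = m₁ + ε₁ satisfy the Diophantine equation M² + M − 8q² + 2 = 0. Then M = (√(32q² − 7) − 1)/2; in particular 32q² − 7 must be a perfect square, i.e. (p, q) with p² − 32q² = −7 gives M = (p−1)/2. The smallest solutions are (q, M) = (1, 2), (2, 5), (32, 90), (67, 189), and every solution with M > 5 has q ≥ 32 and M ≥ 90. -/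
set_option maxRecDepth 10000 in
lemma stmt15_aux : ∀ p ∈ Finset.range 181, ∀ q ∈ Finset.range 32,
    ¬(11 < p ∧ p ^ 2 + 7 = 32 * q ^ 2) := by decide

/-- the Pell-type equation. Solutions of `M² + M − 8q² + 2 = 0` in natural
numbers satisfy `(2M+1)² = 32q² − 7` (so `32q² − 7` is a perfect square); the smallest solutions
are `(q, M) = (1, 2), (2, 5), (32, 90), (67, 189)`, and every solution with `M > 5` has
`q ≥ 32` and `M ≥ 90` (equivalently, odd `p = 2M+1` with `p² − 32q² = −7` and `p > 11`
has `q ≥ 32` and `p ≥ 181`). -/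
theorem stmt15 :
    (∀ M q : ℕ, 1 ≤ q → M ^ 2 + M + 2 = 8 * q ^ 2 →
      (2 * M + 1) ^ 2 + 7 = 32 * q ^ 2) ∧
    (2 ^ 2 + 2 + 2 = 8 * 1 ^ 2 ∧
      5 ^ 2 + 5 + 2 = 8 * 2 ^ 2 ∧ 90 ^ 2 + 90 + 2 = 8 * 32 ^ 2 ∧
      189 ^ 2 + 189 + 2 = 8 * 67 ^ 2) ∧
    (∀ p q : ℕ, Odd p → 1 ≤ q → p ^ 2 + 7 = 32 * q ^ 2 → 11 < p →
      32 ≤ q ∧ 181 ≤ p) := by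
  refine ⟨?_, by norm_num, ?_⟩
  · intro M q hq h; ring_nf; ring_nf at h; omega
  · intro p q _ hq h hp
    have hp181 : 181 ≤ p := by
      by_contra hlt
      push_neg at hlt
      have hq32 : q < 32 := by
        have h2 : q ^ 2 < 32 ^ 2 := by nlinarith
        exact lt_of_pow_lt_pow_left₀ 2 (by norm_num) h2
      exact stmt15_aux p (Finset.mem_range.mpr hlt) q (Finset.mem_range.mpr hq32) ⟨hp, h⟩
    refine ⟨?_, hp181⟩
    by_contra hq32
    push_neg at hq32
    have : q ^ 2 ≤ 31 ^ 2 := Nat.pow_le_pow_left (by omega) 2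
    nlinarith
end

section
/- Let 0 < ν < 1, η = √(1−ν²). The function ϑ(x) = arctan((x/η)/√(1−(x/η)²)) − ν·arctan(ν·(x/η)/√(1−(x/η)²)) is a strictly increasing bijection from (0, η) onto (0, (1−ν)·π/2), and satisfies ϑ'(x) = √(η² − x²)/(1 − x²) for x ∈ (0, η), i.e. ϑ(x) = ∫₀ˣ √(η² − y²)/(1 − y²) dy. -/
/-!
With `u = x / η` and `t = u / √(1 - u²)`, the phase is `ϑ(x) = arctan t - ν arctan (ν t)`.
The map `x ↦ t` is an increasing bijection `(0, η) → (0, ∞)`, and `t ↦ arctan t - ν arctan (ν t)`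
has derivative `(1 - ν²) / ((1 + t²)(1 + ν²t²)) > 0`, vanishes at `0` and tends to `(1 - ν)π/2`,
so it maps `(0, ∞)` increasingly onto `(0, (1 - ν)π/2)`. Since `1 + t² = 1/(1 - u²)` and
`1 + ν²t² = (1 - x²)/(1 - u²)`, the chain rule gives `ϑ'(x) = √(η² - x²)/(1 - x²)`,
and the integral formula follows from `ϑ(0) = 0`.
-/

open Real Set Filter Topology

-- `sinToTan y = tan (arcsin y)` (`Real.tan_arcsin`).
noncomputable def sinToTan (y : ℝ) : ℝ := y / √(1 - y ^ 2)

lemma one_add_mul_sinToTan_sq (ν : ℝ) {y : ℝ} (hy : y ^ 2 < 1) :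
    1 + (ν * sinToTan y) ^ 2 = (1 - (1 - ν ^ 2) * y ^ 2) / (1 - y ^ 2) := by
  have hs : √(1 - y ^ 2) ^ 2 = 1 - y ^ 2 := sq_sqrt (by linarith)
  rw [sinToTan, mul_pow, div_pow, hs]
  field_simp [show 1 - y ^ 2 ≠ 0 by linarith]
  ring

lemma hasDerivAt_sinToTan {y : ℝ} (hy : y ^ 2 < 1) :
    HasDerivAt sinToTan (√(1 - y ^ 2) ^ 3)⁻¹ y := by
  have hpos : 0 < 1 - y ^ 2 := by linarith
  have hs : √(1 - y ^ 2) ^ 2 = 1 - y ^ 2 := sq_sqrt hpos.le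
  have hs0 : 0 < √(1 - y ^ 2) := sqrt_pos.2 hpos
  have hsqrt : HasDerivAt (fun y => √(1 - y ^ 2)) (-(2 * y) / (2 * √(1 - y ^ 2))) y := by
    simpa using ((hasDerivAt_pow 2 y).const_sub 1).sqrt hpos.ne'
  refine ((hasDerivAt_id' y).div hsqrt hs0.ne').congr_deriv ?_
  field_simp
  linear_combination hs

lemma strictMonoOn_sinToTan : StrictMonoOn sinToTan (Ioo 0 1) := by
  intro a ha b hb hab
  have hb2 : b ^ 2 < 1 := by nlinarith [hb.1, hb.2]
  exact div_lt_div₀ hab (sqrt_le_sqrt (by nlinarith [ha.1])) hb.1.le (sqrt_pos.2 (by linarith))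

lemma surjOn_sinToTan : SurjOn sinToTan (Ioo 0 1) (Ioi 0) := by
  intro t (ht : 0 < t)
  have hr : 0 < √(1 + t ^ 2) := sqrt_pos.2 (by positivity)
  have hr2 : √(1 + t ^ 2) ^ 2 = 1 + t ^ 2 := sq_sqrt (by positivity)
  refine ⟨t / √(1 + t ^ 2), ⟨by positivity, (div_lt_one hr).2 (lt_sqrt_of_sq_lt (by linarith))⟩, ?_⟩
  have h1 : 1 - (t / √(1 + t ^ 2)) ^ 2 = (√(1 + t ^ 2) ^ 2)⁻¹ := by
    rw [div_pow, hr2]; field_simp; ring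
  rw [sinToTan, h1, sqrt_inv, sqrt_sq hr.le]
  field_simp

lemma bijOn_sinToTan : BijOn sinToTan (Ioo 0 1) (Ioi 0) :=
  ⟨fun y hy => div_pos hy.1 (sqrt_pos.2 (by nlinarith [hy.1, hy.2])),
    strictMonoOn_sinToTan.injOn, surjOn_sinToTan⟩

lemma bijOn_div_const_Ioo {c : ℝ} (hc : 0 < c) : BijOn (· / c) (Ioo 0 c) (Ioo 0 1) := by
  refine InvOn.bijOn (f' := (· * c)) ⟨fun x _ => ?_, fun x _ => ?_⟩ (fun x hx => ?_)
    (fun x hx => ?_)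
  · field_simp
  · field_simp
  · exact ⟨div_pos hx.1 hc, (div_lt_one hc).2 hx.2⟩
  · exact ⟨mul_pos hx.1 hc, by nlinarith [hx.2]⟩

noncomputable def arctanPhase (ν y : ℝ) : ℝ := arctan y - ν * arctan (ν * y)

lemma hasDerivAt_arctanPhase (ν y : ℝ) :
    HasDerivAt (arctanPhase ν) ((1 - ν ^ 2) / ((1 + y ^ 2) * (1 + (ν * y) ^ 2))) y := by
  have h := (hasDerivAt_arctan y).sub (((hasDerivAt_id' y).const_mul ν).arctan.const_mul ν)
  refine h.congr_deriv ?_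
  field_simp
  ring

lemma strictMono_arctanPhase {ν : ℝ} (hν : ν ^ 2 < 1) : StrictMono (arctanPhase ν) :=
  strictMono_of_hasDerivAt_pos (hasDerivAt_arctanPhase ν) fun y => by
    have : 0 < 1 - ν ^ 2 := by linarith
    positivity

lemma tendsto_arctanPhase_atTop {ν : ℝ} (hν : 0 < ν) :
    Tendsto (arctanPhase ν) atTop (𝓝 ((1 - ν) * π / 2)) := by
  have h := tendsto_arctan_atTop.mono_right nhdsWithin_le_nhds
  rw [show (1 - ν) * π / 2 = π / 2 - ν * (π / 2) by ring]
  exact h.sub ((h.comp (tendsto_id.const_mul_atTop hν)).const_mul ν)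

lemma bijOn_arctanPhase {ν : ℝ} (hν0 : 0 < ν) (hν1 : ν < 1) :
    BijOn (arctanPhase ν) (Ioi 0) (Ioo 0 ((1 - ν) * π / 2)) := by
  have hmono := strictMono_arctanPhase (ν := ν) (by nlinarith)
  have hlim := tendsto_arctanPhase_atTop hν0
  have hzero : arctanPhase ν 0 = 0 := by simp [arctanPhase]
  refine ⟨fun y (hy : 0 < y) => ⟨?_, ?_⟩, hmono.injective.injOn, fun c hc => ?_⟩
  · simpa [hzero] using hmono hy
  · exact (hmono (lt_add_one y)).trans_le (hmono.monotone.ge_of_tendsto hlim _)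
  · obtain ⟨b, hcb, hb⟩ := ((hlim.eventually (eventually_gt_nhds hc.2)).and
      (eventually_ge_atTop 0)).exists
    have hcont : Continuous (arctanPhase ν) := by unfold arctanPhase; fun_prop
    obtain ⟨y, hy, rfl⟩ :=
      intermediate_value_Ioo hb hcont.continuousOn ⟨by simpa [hzero] using hc.1, hcb⟩
    exact ⟨y, hy.1, rfl⟩

lemma hasDerivAt_arctanPhase_sinToTan {ν η x : ℝ} (hη : 0 < η) (hνη : η ^ 2 = 1 - ν ^ 2)
    (hx : x ^ 2 < η ^ 2) :
    HasDerivAt (fun x => arctanPhase ν (sinToTan (x / η))) (√(η ^ 2 - x ^ 2) / (1 - x ^ 2)) x := by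
  obtain ⟨u, rfl⟩ : ∃ u, x = η * u := ⟨x / η, by field_simp⟩
  have hxu : η * u / η = u := by field_simp
  have hu : u ^ 2 < 1 := by nlinarith
  have hdiv : HasDerivAt (· / η) η⁻¹ (η * u) := by simpa using (hasDerivAt_id' (η * u)).div_const η
  have h := (hasDerivAt_arctanPhase ν (sinToTan u)).comp_of_eq (η * u)
    ((hasDerivAt_sinToTan hu).comp_of_eq (η * u) hdiv hxu.symm) (by simp [hxu])
  refine h.congr_deriv ?_
  have hsq : √(η ^ 2 - (η * u) ^ 2) = η * √(1 - u ^ 2) := by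
    rw [show η ^ 2 - (η * u) ^ 2 = η ^ 2 * (1 - u ^ 2) by ring, sqrt_mul (sq_nonneg η),
      sqrt_sq hη.le]
  have hs : √(1 - u ^ 2) ^ 2 = 1 - u ^ 2 := sq_sqrt (by linarith)
  have hs0 : 0 < √(1 - u ^ 2) := sqrt_pos.2 (by linarith)
  have ht : 1 + sinToTan u ^ 2 = 1 / (1 - u ^ 2) := by simpa using one_add_mul_sinToTan_sq 1 hu
  rw [hsq, one_add_mul_sinToTan_sq ν hu, ht, ← hνη]
  generalize √(1 - u ^ 2) = s at hs hs0 ⊢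
  have h1 : 0 < 1 - η ^ 2 * u ^ 2 := by nlinarith
  rw [← hs, mul_pow]
  field_simp

/-- The WKB phase `ϑ` is a strictly increasing bijection from `(0, η)` onto
`(0, (1−ν)π/2)` with `ϑ'(x) = √(η² − x²)/(1 − x²)`, i.e. `ϑ(x) = ∫₀ˣ √(η²−y²)/(1−y²) dy`. -/
theorem stmt17 (ν : ℝ) (hν0 : 0 < ν) (hν1 : ν < 1)
    (η : ℝ) (hη : η = Real.sqrt (1 - ν ^ 2))
    (ϑ : ℝ → ℝ)
    (hϑ : ∀ x : ℝ, ϑ x =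
      Real.arctan ((x / η) / Real.sqrt (1 - (x / η) ^ 2)) -
        ν * Real.arctan (ν * ((x / η) / Real.sqrt (1 - (x / η) ^ 2)))) :
    StrictMonoOn ϑ (Ioo 0 η) ∧
    BijOn ϑ (Ioo 0 η) (Ioo 0 ((1 - ν) * π / 2)) ∧
    (∀ x ∈ Ioo 0 η, HasDerivAt ϑ (Real.sqrt (η ^ 2 - x ^ 2) / (1 - x ^ 2)) x) ∧
    (∀ x ∈ Ioo 0 η, ϑ x = ∫ y in (0 : ℝ)..x, Real.sqrt (η ^ 2 - y ^ 2) / (1 - y ^ 2)) := by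
  have hη0 : 0 < η := hη ▸ sqrt_pos.2 (by nlinarith)
  have hη2 : η ^ 2 = 1 - ν ^ 2 := hη ▸ sq_sqrt (by nlinarith)
  obtain rfl : ϑ = fun x => arctanPhase ν (sinToTan (x / η)) := funext hϑ
  have hderiv : ∀ x, x ^ 2 < η ^ 2 → HasDerivAt (fun x => arctanPhase ν (sinToTan (x / η)))
      (√(η ^ 2 - x ^ 2) / (1 - x ^ 2)) x :=
    fun x hx => hasDerivAt_arctanPhase_sinToTan hη0 hη2 hx
  have hsq : ∀ {x y}, 0 ≤ y → y ≤ x → x < η → y ^ 2 < η ^ 2 :=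
    fun hy hyx hx => sq_lt_sq' (by linarith) (hyx.trans_lt hx)
  have hscale := bijOn_div_const_Ioo hη0
  refine ⟨(strictMono_arctanPhase (by nlinarith)).comp_strictMonoOn
      (strictMonoOn_sinToTan.comp ((strictMono_div_right_of_pos hη0).strictMonoOn _) hscale.mapsTo),
    (bijOn_arctanPhase hν0 hν1).comp (bijOn_sinToTan.comp hscale),
    fun x hx => hderiv x (hsq hx.1.le le_rfl hx.2), fun x hx => ?_⟩
  have hsub : ∀ y ∈ uIcc 0 x, y ^ 2 < η ^ 2 := fun y hy => by
    rw [uIcc_of_le hx.1.le] at hy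
    exact hsq hy.1 hy.2 hx.2
  have hint :
      IntervalIntegrable (fun y => √(η ^ 2 - y ^ 2) / (1 - y ^ 2)) MeasureTheory.volume 0 x :=
    ContinuousOn.intervalIntegrable <| ContinuousOn.div (by fun_prop) (by fun_prop)
      fun y hy => by nlinarith [hsub y hy]
  rw [intervalIntegral.integral_eq_sub_of_hasDerivAt (fun y hy => hderiv y (hsub y hy)) hint]
  simp [arctanPhase, sinToTan]
end

section
/- For 0 < ν < 1, η = √(1−ν²), and x ∈ (0, η) with x² ≥ 2η² − 1, one has ∫ₓ^η √(η² − y²)/(1 − y²) dy ≤ (η² − x²)^{3/2} / (2x(1 − x²)). -/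
open Real Set

/-- Case 1 of the WKB error estimate. For `x ∈ (0, η)` with `x² ≥ 2η² − 1`,
`∫ₓ^η √(η²−y²)/(1−y²) dy ≤ (η²−x²)^{3/2} / (2x(1−x²))`. -/
theorem stmt18 (ν : ℝ) (hν0 : 0 < ν) (hν1 : ν < 1)
    (η : ℝ) (hη : η = Real.sqrt (1 - ν ^ 2))
    (x : ℝ) (hx : x ∈ Ioo 0 η) (hcase : 2 * η ^ 2 - 1 ≤ x ^ 2) :
    (∫ y in x..η, Real.sqrt (η ^ 2 - y ^ 2) / (1 - y ^ 2)) ≤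
      (η ^ 2 - x ^ 2) ^ ((3 : ℝ) / 2) / (2 * x * (1 - x ^ 2)) := by
  obtain ⟨hx0, hxη⟩ := hx
  have hη0 : 0 < η := lt_trans hx0 hxη
  have hη1 : η < 1 := by
    rw [hη]
    have h1 : 1 - ν ^ 2 < 1 := by nlinarith
    calc Real.sqrt (1 - ν ^ 2) < Real.sqrt 1 := by
          apply Real.sqrt_lt_sqrt (by nlinarith) h1
      _ = 1 := Real.sqrt_one
  have hx1 : x < 1 := lt_trans hxη hη1
  have h1x : (0:ℝ) < 1 - x ^ 2 := by nlinarith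
  have ht0 : (0:ℝ) < η ^ 2 - x ^ 2 := by nlinarith
  -- pointwise bound
  have hbound : ∀ y ∈ Icc x η,
      Real.sqrt (η ^ 2 - y ^ 2) / (1 - y ^ 2) ≤
      Real.sqrt (η ^ 2 - x ^ 2) / (1 - x ^ 2) := by
    intro y ⟨hy1, hy2⟩
    have hy0 : 0 < y := lt_of_lt_of_le hx0 hy1
    have h1y : (0:ℝ) < 1 - y ^ 2 := by nlinarith
    have hty : (0:ℝ) ≤ η ^ 2 - y ^ 2 := by nlinarith
    rw [div_le_div_iff₀ h1y h1x]
    have hA := Real.sq_sqrt hty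
    have hB := Real.sq_sqrt ht0.le
    have hAn := Real.sqrt_nonneg (η ^ 2 - y ^ 2)
    have hBn := Real.sqrt_nonneg (η ^ 2 - x ^ 2)
    -- squares inequality: (η²−y²)(1−x²)² ≤ (η²−x²)(1−y²)²
    have hsq : (η ^ 2 - y ^ 2) * (1 - x ^ 2) ^ 2 ≤ (η ^ 2 - x ^ 2) * (1 - y ^ 2) ^ 2 := by
      nlinarith [mul_nonneg (mul_nonneg (by nlinarith : (0:ℝ) ≤ 1 - x ^ 2)
          (by nlinarith : (0:ℝ) ≤ x ^ 2 - (2 * η ^ 2 - 1)))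
          (by nlinarith : (0:ℝ) ≤ y ^ 2 - x ^ 2),
        mul_nonneg (by nlinarith : (0:ℝ) ≤ η ^ 2 - x ^ 2) (sq_nonneg (y ^ 2 - x ^ 2))]
    have e1 : (Real.sqrt (η ^ 2 - y ^ 2) * (1 - x ^ 2)) ^ 2
        = (η ^ 2 - y ^ 2) * (1 - x ^ 2) ^ 2 := by rw [mul_pow, hA]
    have e2 : (Real.sqrt (η ^ 2 - x ^ 2) * (1 - y ^ 2)) ^ 2
        = (η ^ 2 - x ^ 2) * (1 - y ^ 2) ^ 2 := by rw [mul_pow, hB]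
    have h1 : Real.sqrt ((Real.sqrt (η ^ 2 - y ^ 2) * (1 - x ^ 2)) ^ 2)
        ≤ Real.sqrt ((Real.sqrt (η ^ 2 - x ^ 2) * (1 - y ^ 2)) ^ 2) := by
      apply Real.sqrt_le_sqrt
      rw [e1, e2]; exact hsq
    rwa [Real.sqrt_sq (mul_nonneg hAn h1x.le), Real.sqrt_sq (mul_nonneg hBn h1y.le)] at h1
  -- integrability
  have hcont : ContinuousOn (fun y => Real.sqrt (η ^ 2 - y ^ 2) / (1 - y ^ 2)) (Icc x η) := by
    apply ContinuousOn.div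
    · exact (Real.continuous_sqrt.comp (continuous_const.sub (continuous_pow 2))).continuousOn
    · exact (continuous_const.sub (continuous_pow 2)).continuousOn
    · intro y ⟨hy1, hy2⟩
      have : 0 < y := lt_of_lt_of_le hx0 hy1
      nlinarith
  have hint : IntervalIntegrable (fun y => Real.sqrt (η ^ 2 - y ^ 2) / (1 - y ^ 2))
      MeasureTheory.volume x η := by
    apply ContinuousOn.intervalIntegrable
    rwa [uIcc_of_le hxη.le]
  have hmono : (∫ y in x..η, Real.sqrt (η ^ 2 - y ^ 2) / (1 - y ^ 2)) ≤
      ∫ _ in x..η, Real.sqrt (η ^ 2 - x ^ 2) / (1 - x ^ 2) := by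
    apply intervalIntegral.integral_mono_on hxη.le hint intervalIntegrable_const hbound
  rw [intervalIntegral.integral_const, smul_eq_mul] at hmono
  refine le_trans hmono ?_
  -- final algebra
  have hrpow : (η ^ 2 - x ^ 2) ^ ((3:ℝ)/2) = (η ^ 2 - x ^ 2) * Real.sqrt (η ^ 2 - x ^ 2) := by
    rw [show (3:ℝ)/2 = 1 + 1/2 by norm_num, Real.rpow_add ht0, Real.rpow_one,
      Real.sqrt_eq_rpow]
  rw [hrpow, ← mul_div_assoc]
  rw [div_le_div_iff₀ h1x (by positivity : (0:ℝ) < 2 * x * (1 - x ^ 2))]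
  have hs := Real.sqrt_nonneg (η ^ 2 - x ^ 2)
  nlinarith [mul_nonneg (mul_nonneg hs h1x.le) (sq_nonneg (η - x))]
end

section
/- Let 0 < η < 1 and 0 ≤ x < η with 1 − x² ≥ 2(1 − η²). Then √(1 − x²) − √(1 − η²) ≤ (η² − x²)^{3/2}/(1 − x²). -/
/-- elementary inequality from Case 2 of the WKB error bound.
If `0 < η < 1`, `0 ≤ x < η` and `1 − x² ≥ 2(1 − η²)`, then
`√(1−x²) − √(1−η²) ≤ (η²−x²)^{3/2}/(1−x²)`. -/
theorem stmt19 (η x : ℝ) (hη0 : 0 < η) (hη1 : η < 1)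
    (hx0 : 0 ≤ x) (hxη : x < η) (hcase : 2 * (1 - η ^ 2) ≤ 1 - x ^ 2) :
    Real.sqrt (1 - x ^ 2) - Real.sqrt (1 - η ^ 2) ≤
      (η ^ 2 - x ^ 2) ^ ((3 : ℝ) / 2) / (1 - x ^ 2) := by
  have hx1 : x < 1 := lt_trans hxη hη1
  have ha : (0:ℝ) < 1 - x ^ 2 := by nlinarith
  have hb : (0:ℝ) < 1 - η ^ 2 := by nlinarith
  have hs : (0:ℝ) < η ^ 2 - x ^ 2 := by nlinarith
  set A := Real.sqrt (1 - x ^ 2) with hA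
  set B := Real.sqrt (1 - η ^ 2) with hB
  set S := Real.sqrt (η ^ 2 - x ^ 2) with hS
  have hA2 : A ^ 2 = 1 - x ^ 2 := Real.sq_sqrt ha.le
  have hB2 : B ^ 2 = 1 - η ^ 2 := Real.sq_sqrt hb.le
  have hS2 : S ^ 2 = η ^ 2 - x ^ 2 := Real.sq_sqrt hs.le
  have hA0 : 0 ≤ A := Real.sqrt_nonneg _
  have hB0 : 0 ≤ B := Real.sqrt_nonneg _
  have hS0 : 0 ≤ S := Real.sqrt_nonneg _
  have hAB : B ≤ A := Real.sqrt_le_sqrt (by nlinarith)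
  have hcase' : 2 * B ^ 2 ≤ A ^ 2 := by rw [hA2, hB2]; exact hcase
  -- key: A^2 ≤ S * (A + B)
  have hkey : A ^ 2 ≤ S * (A + B) := by
    nlinarith [sq_nonneg (S * (A + B) - A ^ 2), mul_nonneg hS0 (by linarith : (0:ℝ) ≤ A + B),
      mul_nonneg hB0 (mul_nonneg hA0 hB0), mul_nonneg hB0 hA0, sq_nonneg (A - B),
      mul_nonneg (mul_nonneg hB0 hB0) hB0, mul_nonneg hA0 hA0]
  have hrpow : (η ^ 2 - x ^ 2) ^ ((3 : ℝ) / 2) = (η ^ 2 - x ^ 2) * S := by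
    rw [show (3:ℝ)/2 = 1 + 1/2 by norm_num, Real.rpow_add hs, Real.rpow_one, hS,
      Real.sqrt_eq_rpow]
  rw [hrpow, le_div_iff₀ ha]
  -- goal: (A - B) * (1 - x^2) ≤ (η^2 - x^2) * S
  have h1 : (A - B) * A ^ 2 ≤ (A - B) * (S * (A + B)) :=
    mul_le_mul_of_nonneg_left hkey (by linarith)
  have h2 : (A - B) * (S * (A + B)) = S * (A ^ 2 - B ^ 2) := by ring
  nlinarith [h1, h2, hA2, hB2]
end
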